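/- arXiv:1101.0991 — 6 statements merged into one kernel-verified Lean document; each statement's English description precedes it below -/
import Mathlib

section
/- Let R = k[[X₁,…,X_n,Y]]/𝔞 be a residue ring of a formal power series ring over a field k with n ≥ 1, and assume that Yˡ⁺¹ ∈ 𝔞 ⊆ (X₁,…,X_n,Y)ˡ⁺¹ for some integer l ≥ 1. Then mod R has a nontrivial extension-closed subcategory. -/
universe u

open IsLocalRing

/-- A membership predicate for a strict full subcategory of the category of `R`-modules. -/
def ModulePred (R : Type u) [CommRing R] : Type (u + 1) :=
  ∀ (M : Type u) [AddCommGroup M] [Module R M], Prop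

/-- `P` is an extension-closed subcategory of `mod R`: a nonempty strict full subcategory of
the category of finitely generated `R`-modules that is closed under direct summands and
extensions. -/
def IsExtClosedSubcat (R : Type u) [CommRing R] (P : ModulePred R) : Prop :=
  (∀ (M : Type u) [AddCommGroup M] [Module R M], P M → Module.Finite R M)
  ∧ (∀ (M N : Type u) [AddCommGroup M] [Module R M] [AddCommGroup N] [Module R N],
      Nonempty (M ≃ₗ[R] N) → P M → P N)
  ∧ (∃ (M : Type u) (_ : AddCommGroup M) (_ : Module R M), P M)
  ∧ (∀ (M N : Type u) [AddCommGroup M] [Module R M] [AddCommGroup N] [Module R N],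
      P M → (∃ (ι : N →ₗ[R] M) (π : M →ₗ[R] N), π ∘ₗ ι = LinearMap.id) → P N)
  ∧ (∀ (L M N : Type u) [AddCommGroup L] [Module R L] [AddCommGroup M] [Module R M]
      [AddCommGroup N] [Module R N] (f : L →ₗ[R] M) (g : M →ₗ[R] N),
      Function.Injective f → Function.Surjective g → Function.Exact f g →
      P L → P N → P M)

/-- `P` is the zero subcategory of `mod R`. -/
def IsZeroSubcat (R : Type u) [CommRing R] (P : ModulePred R) : Prop :=
  ∀ (M : Type u) [AddCommGroup M] [Module R M], Module.Finite R M → (P M ↔ Subsingleton M)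

/-- `P` is `add R`, the subcategory of finitely generated free `R`-modules. -/
def IsAddRSubcat (R : Type u) [CommRing R] (P : ModulePred R) : Prop :=
  ∀ (M : Type u) [AddCommGroup M] [Module R M], Module.Finite R M → (P M ↔ Module.Free R M)

/-- `P` is all of `mod R`. -/
def IsModRSubcat (R : Type u) [CommRing R] (P : ModulePred R) : Prop :=
  ∀ (M : Type u) [AddCommGroup M] [Module R M], Module.Finite R M → P M

/-- `mod R` has only trivial extension-closed subcategories. -/
def HasOnlyTrivialExtClosedSubcats (R : Type u) [CommRing R] : Prop :=
  ∀ P : ModulePred R, IsExtClosedSubcat R P →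
    IsZeroSubcat R P ∨ IsAddRSubcat R P ∨ IsModRSubcat R P

/-- `mod R` has a nontrivial extension-closed subcategory. -/
def HasNontrivialExtClosedSubcat (R : Type u) [CommRing R] : Prop :=
  ∃ P : ModulePred R, IsExtClosedSubcat R P ∧
    ¬ IsZeroSubcat R P ∧ ¬ IsAddRSubcat R P ∧ ¬ IsModRSubcat R P

/-- `R` is an Artinian hypersurface: `R ≅ S/(xⁿ)` for a discrete valuation ring `S`
with maximal ideal `(x)` and a positive integer `n`. -/
def IsArtinianHypersurface (R : Type u) [CommRing R] : Prop :=
  ∃ (S : Type u) (_ : CommRing S) (_ : IsDomain S) (_ : IsDiscreteValuationRing S)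
    (x : S) (n : ℕ),
    IsLocalRing.maximalIdeal S = Ideal.span {x} ∧ 0 < n ∧
    Nonempty (R ≃+* S ⧸ Ideal.span {x ^ n})


open MvPowerSeries Finsupp



section PS

variable {k : Type u} [Field k] {n : ℕ}

local notation "S" => MvPowerSeries (Fin (n + 1)) k

/-- The decomposition of a power series with zero constant term as `∑ i, X i * g i`. -/
theorem ps_decomp (f : S) (hf : constantCoeff f = 0) :
    ∃ g : Fin (n + 1) → S, f = ∑ i, X i * g i := by
  classical
  refine ⟨fun i => fun m => if ∀ j < i, m j = 0 then f (m + Finsupp.single i 1) else 0, ?_⟩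
  ext m
  rw [map_sum]
  by_cases hm : m = 0
  · subst hm
    rw [show constantCoeff f = coeff 0 f from rfl] at hf
    rw [hf]
    symm
    apply Finset.sum_eq_zero
    intro i _
    erw [X_def, coeff_monomial_mul]
    rw [if_neg]
    intro hle
    have := (Finsupp.single_le_iff).mp hle
    simp at this
  · have hsupp : m.support.Nonempty := Finsupp.support_nonempty_iff.mpr hm
    set i₀ := m.support.min' hsupp with hi₀
    have hi₀mem : i₀ ∈ m.support := m.support.min'_mem hsupp
    have hmi₀ : m i₀ ≠ 0 := Finsupp.mem_support_iff.mp hi₀mem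
    rw [Finset.sum_eq_single i₀]
    · erw [X_def, coeff_monomial_mul, if_pos (Finsupp.single_le_iff.mpr (Nat.one_le_iff_ne_zero.mpr hmi₀))]
      rw [one_mul]
      simp only [coeff_apply]
      erw [coeff_apply]
      beta_reduce
      rw [if_pos]
      · congr 1
        rw [tsub_add_cancel_of_le (Finsupp.single_le_iff.mpr (Nat.one_le_iff_ne_zero.mpr hmi₀))]
      · intro j hj
        have : j ∉ m.support := fun hjm => absurd (m.support.min'_le j hjm) (not_le.mpr hj)
        have hmj : m j = 0 := Finsupp.notMem_support_iff.mp this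
        rw [Finsupp.tsub_apply, hmj]
        omega
    · intro i _ hi
      erw [X_def, coeff_monomial_mul]
      by_cases hle : Finsupp.single i 1 ≤ m
      · rw [if_pos hle, one_mul]
        simp only [coeff_apply]
        erw [coeff_apply]
        beta_reduce
        rw [if_neg]
        intro hall
        have hii : i₀ < i := by
          rcases lt_or_ge i₀ i with h | h
          · exact h
          · exfalso
            rcases eq_or_lt_of_le h with h' | h' 
            · exact hi h'
            · exact hi ((m.support.min'_le i (Finsupp.mem_support_iff.mpr
                (by
                  have := Finsupp.single_le_iff.mp hle
                  omega))).antisymm h'.le ▸ rfl)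
        have := hall i₀ hii
        rw [Finsupp.tsub_apply, Finsupp.single_apply, if_neg (by exact fun h => hi h)] at this
        simp at this
        exact hmi₀ this
      · rw [if_neg hle]
    · intro h
      exact absurd (Finset.mem_univ i₀) h

end PS

/-- The ideal generated by the first `n` variables. -/
noncomputable def Jdef (k : Type u) [Field k] (n : ℕ) : Ideal (MvPowerSeries (Fin (n + 1)) k) :=
  Ideal.span (Set.range fun i : Fin n => X i.castSucc)

section PS2

variable {k : Type u} [Field k] {n : ℕ}

local notation "S" => MvPowerSeries (Fin (n + 1)) k
local notation "J" => Jdef k n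

theorem ps_step (h : S) :
    ∃ c : k, ∃ h' : S, h - (MvPowerSeries.C c + X (Fin.last n) * h') ∈ J := by
  obtain ⟨g, hg⟩ := ps_decomp (h - MvPowerSeries.C (constantCoeff h))
    (by rw [map_sub, constantCoeff_C, sub_self])
  refine ⟨constantCoeff h, g (Fin.last n), ?_⟩
  have : h - (MvPowerSeries.C (constantCoeff h) + X (Fin.last n) * g (Fin.last n))
      = ∑ i : Fin n, X i.castSucc * g i.castSucc := by
    rw [Fin.sum_univ_castSucc] at hg
    rw [sub_add_eq_sub_sub]
    rw [hg]
    ring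
  rw [this]
  apply Ideal.sum_mem
  intro i _
  exact Ideal.mul_mem_right _ _ (Ideal.subset_span ⟨i, rfl⟩)

theorem ps_iterate (N : ℕ) (s : S) :
    ∃ p : Polynomial k, ∃ h : S,
      s - (Polynomial.aeval (X (Fin.last n)) p + X (Fin.last n) ^ N * h) ∈ J := by
  induction N generalizing s with
  | zero =>
    refine ⟨0, s, ?_⟩
    simp
  | succ N ih =>
    obtain ⟨p, h, hp⟩ := ih s
    obtain ⟨c, h', hc⟩ := ps_step h
    refine ⟨p + Polynomial.C c * Polynomial.X ^ N, h', ?_⟩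
    have key : s - (Polynomial.aeval (X (Fin.last n)) (p + Polynomial.C c * Polynomial.X ^ N)
        + X (Fin.last n) ^ (N + 1) * h')
        = (s - (Polynomial.aeval (X (Fin.last n)) p + X (Fin.last n) ^ N * h))
          + X (Fin.last n) ^ N *
            (h - (MvPowerSeries.C c + X (Fin.last n) * h')) := by
      rw [map_add, map_mul, map_pow, Polynomial.aeval_C, Polynomial.aeval_X]
      have : (algebraMap k S) c = MvPowerSeries.C c := rfl
      rw [this]
      ring
    rw [key]
    exact Ideal.add_mem _ hp (Ideal.mul_mem_left _ _ hc)


end PS2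



theorem idealSupPow {T : Type u} [CommRing T] (K₁ K₂ : Ideal T) (m : ℕ) :
    (K₁ ⊔ K₂) ^ m ≤ K₁ ⊔ K₂ ^ m := by
  induction m with
  | zero => simp
  | succ m ih =>
    calc (K₁ ⊔ K₂) ^ (m + 1) = (K₁ ⊔ K₂) ^ m * (K₁ ⊔ K₂) := pow_succ _ _
    _ ≤ (K₁ ⊔ K₂ ^ m) * (K₁ ⊔ K₂) := Ideal.mul_mono ih le_rfl
    _ = K₁ * K₁ ⊔ K₁ * K₂ ⊔ (K₂ ^ m * K₁ ⊔ K₂ ^ m * K₂) := by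
        rw [Ideal.sup_mul, Ideal.mul_sup, Ideal.mul_sup]
    _ ≤ K₁ ⊔ K₂ ^ (m + 1) := by
        refine sup_le (sup_le ?_ ?_) (sup_le ?_ ?_)
        · exact le_sup_of_le_left Ideal.mul_le_right
        · exact le_sup_of_le_left Ideal.mul_le_left
        · exact le_sup_of_le_left Ideal.mul_le_right
        · rw [← pow_succ]
          exact le_sup_right

section PS3

variable {k : Type u} [Field k] {n l : ℕ}

local notation "S" => MvPowerSeries (Fin (n + 1)) k

/-- The ideal `(X₁, …, Xₙ, Y^(l+1))`. -/
noncomputable def cdef (k : Type u) [Field k] (n l : ℕ) : Ideal (MvPowerSeries (Fin (n + 1)) k) :=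
  Ideal.span ((Set.range fun i : Fin n => X i.castSucc) ∪ {X (Fin.last n) ^ (l + 1)})

theorem coeff_eq_zero_of_mem_cdef {f : S} (hf : f ∈ cdef k n l) {i : ℕ} (hi : i ≤ l) :
    coeff (Finsupp.single (Fin.last n) i) f = 0 := by
  classical
  have main : ∀ s : S, coeff (Finsupp.single (Fin.last n) i) (s * f) = 0 := by
    refine Submodule.span_induction ?_ ?_ ?_ ?_ hf
    · rintro x (⟨j, rfl⟩ | rfl)
      · intro s
        dsimp only
        rw [X_def, coeff_mul_monomial, if_neg]
        intro hle
        have h2 := Finsupp.single_le_iff.mp hle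
        rw [Finsupp.single_apply, if_neg (Fin.castSucc_lt_last j).ne'] at h2
        omega
      · intro s
        rw [X_pow_eq, coeff_mul_monomial, if_neg]
        intro hle
        have := Finsupp.single_le_iff.mp hle
        rw [Finsupp.single_apply, if_pos rfl] at this
        omega
    · intro s
      rw [mul_zero, map_zero]
    · intro x y _ _ hx hy s
      rw [mul_add, map_add, hx, hy, add_zero]
    · intro a x _ hx s
      rw [smul_eq_mul, show s * (a * x) = s * a * x by ring, hx]
  have := main 1
  rwa [one_mul] at this

theorem spanX_eq :
    Ideal.span (Set.range (X : Fin (n + 1) → S)) =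
      Ideal.span (Set.range fun i : Fin n => (X i.castSucc : S)) ⊔
        Ideal.span {(X (Fin.last n) : S)} := by
  rw [← Ideal.span_union]
  congr 1
  ext x
  constructor
  · rintro ⟨i, rfl⟩
    rcases Fin.eq_castSucc_or_eq_last i with ⟨j, rfl⟩ | rfl
    · exact Or.inl ⟨j, rfl⟩
    · exact Or.inr rfl
  · rintro (⟨j, rfl⟩ | rfl)
    · exact ⟨j.castSucc, rfl⟩
    · exact ⟨Fin.last n, rfl⟩

theorem spanX_pow_le_cdef :
    (Ideal.span (Set.range (X : Fin (n + 1) → S))) ^ (l + 1) ≤ cdef k n l := by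
  rw [spanX_eq]
  refine le_trans (idealSupPow _ _ _) ?_
  rw [Ideal.span_singleton_pow, cdef, Ideal.span_union]

theorem X_not_mem_spanX_sq (i : Fin (n + 1)) :
    (X i : S) ∉ (Ideal.span (Set.range (X : Fin (n + 1) → S))) ^ 2 := by
  classical
  intro hmem
  rw [pow_two, Ideal.span_mul_span] at hmem
  have main : ∀ x ∈ Ideal.span (⋃ (s' ∈ Set.range (X : Fin (n + 1) → S))
      (t ∈ Set.range (X : Fin (n + 1) → S)), {s' * t}),
      ∀ s : S, coeff (Finsupp.single i 1) (s * x) = 0 := by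
    intro x hx
    refine Submodule.span_induction ?_ ?_ ?_ ?_ hx
    · intro x hxx s
      simp only [Set.mem_iUnion, Set.mem_singleton_iff] at hxx
      obtain ⟨-, ⟨a, rfl⟩, -, ⟨b, rfl⟩, rfl⟩ := hxx
      rw [show s * (X a * X b) = s * X a * X b by ring,
        show (X b : S) = monomial (Finsupp.single b 1) 1 from X_def b, coeff_mul_monomial]
      by_cases hb : b = i
      · subst hb
        rw [if_pos (le_refl _), tsub_self]
        rw [show (X a : S) = monomial (Finsupp.single a 1) 1 from X_def a, coeff_mul_monomial,
          if_neg, zero_mul]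
        intro hle
        have h2 := Finsupp.single_le_iff.mp hle
        simp at h2
      · rw [if_neg]
        intro hle
        have h2 := Finsupp.single_le_iff.mp hle
        rw [Finsupp.single_apply, if_neg (fun h => hb h.symm)] at h2
        omega
    · intro s
      rw [mul_zero, map_zero]
    · intro x y _ _ hx hy s
      rw [mul_add, map_add, hx, hy, add_zero]
    · intro a x _ hx s
      rw [smul_eq_mul, show s * (a * x) = s * a * x by ring, hx]
  have := main _ (by convert hmem using 2; ext; simp [Set.mem_mul, eq_comm]) 1
  rw [one_mul, X_def, coeff_monomial_same] at this
  exact one_ne_zero this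

end PS3



section Aring

variable (k : Type u) [Field k] (l : ℕ)

/-- The artinian local ring `k[Y]/(Y^(l+1))`. -/
def Adef : Type u := Polynomial k ⧸ Ideal.span {(Polynomial.X : Polynomial k) ^ (l + 1)}

noncomputable instance : CommRing (Adef k l) :=
  inferInstanceAs (CommRing (Polynomial k ⧸ Ideal.span {(Polynomial.X : Polynomial k) ^ (l + 1)}))

theorem Adef_nontrivial : Nontrivial (Adef k l) := by
  refine Ideal.Quotient.nontrivial_iff.mpr ?_
  rw [Ne, Ideal.span_singleton_eq_top]
  intro h
  exact Polynomial.not_isUnit_X ((isUnit_pow_iff (Nat.succ_ne_zero l)).mp h)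

variable {k l}

theorem Adef_nilpotent_of_coeff_zero (p : Polynomial k) (hp : p.coeff 0 = 0) :
    IsNilpotent (Ideal.Quotient.mk (Ideal.span {(Polynomial.X : Polynomial k) ^ (l + 1)}) p) := by
  refine ⟨l + 1, ?_⟩
  rw [← map_pow, Ideal.Quotient.eq_zero_iff_mem, Ideal.mem_span_singleton]
  exact pow_dvd_pow_of_dvd (Polynomial.X_dvd_iff.mpr hp) _

theorem Adef_isUnit_of_coeff_ne_zero (p : Polynomial k) (hp : p.coeff 0 ≠ 0) :
    IsUnit (Ideal.Quotient.mk (Ideal.span {(Polynomial.X : Polynomial k) ^ (l + 1)}) p) := by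
  set mk := Ideal.Quotient.mk (Ideal.span {(Polynomial.X : Polynomial k) ^ (l + 1)})
  have h1 : IsUnit (mk (Polynomial.C (p.coeff 0))) :=
    (Polynomial.isUnit_C.mpr (isUnit_iff_ne_zero.mpr hp)).map mk
  have h2 : IsNilpotent (mk (p - Polynomial.C (p.coeff 0))) :=
    Adef_nilpotent_of_coeff_zero _ (by
      rw [Polynomial.coeff_sub, Polynomial.coeff_C_zero, sub_self])
  have := h2.isUnit_add_left_of_commute h1 (Commute.all _ _)
  rwa [← map_add, add_sub_cancel] at this

variable (k l)

theorem Adef_local : IsLocalRing (Adef k l) := by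
  have : Nontrivial (Adef k l) := Adef_nontrivial k l
  refine IsLocalRing.of_isUnit_or_isUnit_one_sub_self ?_
  intro a
  obtain ⟨p, rfl⟩ := Ideal.Quotient.mk_surjective a
  by_cases hp : p.coeff 0 = 0
  · right
    have h1 : (1 : Adef k l) - (Ideal.Quotient.mk _) p = (Ideal.Quotient.mk _) (1 - p) := by
      rw [map_sub, map_one]; rfl
    erw [h1]
    refine Adef_isUnit_of_coeff_ne_zero _ ?_
    rw [Polynomial.coeff_sub, Polynomial.coeff_one_zero, hp, sub_zero]
    exact one_ne_zero
  · exact Or.inl (Adef_isUnit_of_coeff_ne_zero _ hp)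

end Aring

section CoeffAeval

variable {k : Type u} [Field k] {n : ℕ}

local notation "S" => MvPowerSeries (Fin (n + 1)) k

theorem coeff_aeval (p : Polynomial k) (i : ℕ) :
    coeff (Finsupp.single (Fin.last n) i) (Polynomial.aeval (X (Fin.last n) : S) p)
      = p.coeff i := by
  classical
  rw [Polynomial.aeval_eq_sum_range, map_sum]
  have hterm : ∀ j, coeff (Finsupp.single (Fin.last n) i)
      (p.coeff j • (X (Fin.last n) : S) ^ j) = if j = i then p.coeff j else 0 := by
    intro j
    rw [map_smul, X_pow_eq, coeff_monomial]
    by_cases hji : j = i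
    · subst hji
      rw [if_pos rfl, if_pos rfl, smul_eq_mul, mul_one]
    · rw [if_neg (fun h => hji (Finsupp.single_injective _ h.symm)), if_neg hji, smul_zero]
  rw [Finset.sum_congr rfl fun j _ => hterm j, Finset.sum_ite_eq']
  by_cases hi : i ∈ Finset.range (p.natDegree + 1)
  · rw [if_pos hi]
  · rw [if_neg hi]
    exact (Polynomial.coeff_eq_zero_of_natDegree_lt (by
      simpa using Nat.lt_of_succ_le (not_lt.mp (by simpa using hi)))).symm

end CoeffAeval


section Transfer

variable {A R : Type u} [CommRing A] [CommRing R] (φ : A →+* R)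

variable {M N : Type u}
  [AddCommGroup M] [Module R M] [Module A M]
  [AddCommGroup N] [Module R N] [Module A N]
  (hM : ∀ (a : A) (m : M), a • m = φ a • m)
  (hN : ∀ (a : A) (m : N), a • m = φ a • m)

/-- An `R`-linear map is `A`-linear for compatible `A`-module structures. -/
def mkALinear (f : M →ₗ[R] N) : M →ₗ[A] N where
  toFun := f
  map_add' := map_add f
  map_smul' := fun a m => by
    simp only [RingHom.id_apply]
    rw [hM, hN, map_smul]

@[simp] theorem mkALinear_apply (f : M →ₗ[R] N) (m : M) : mkALinear φ hM hN f m = f m := rfl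

/-- An `R`-linear equiv is `A`-linear for compatible `A`-module structures. -/
def mkAEquiv (e : M ≃ₗ[R] N) : M ≃ₗ[A] N :=
  { mkALinear φ hM hN e.toLinearMap with
    invFun := e.symm
    left_inv := e.left_inv
    right_inv := e.right_inv }

include hM in
theorem finiteR_of_finiteA [Module.Finite A M] : Module.Finite R M := by
  obtain ⟨s, hs⟩ := Module.Finite.fg_top (R := A) (M := M)
  refine ⟨⟨s, ?_⟩⟩
  rw [eq_top_iff]
  intro m _
  have hm : m ∈ Submodule.span A (s : Set M) := by rw [hs]; trivial
  refine Submodule.span_induction ?_ ?_ ?_ ?_ hm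
  · exact fun x hx => Submodule.subset_span hx
  · exact Submodule.zero_mem _
  · exact fun x y _ _ hx hy => Submodule.add_mem _ hx hy
  · intro a x _ hx
    rw [hM]
    exact Submodule.smul_mem _ _ hx

include hM hN in
theorem finiteA_of_split (ι : N →ₗ[R] M) (π : M →ₗ[R] N) (hsplit : π ∘ₗ ι = LinearMap.id)
    [Module.Finite A M] : Module.Finite A N := by
  refine Module.Finite.of_surjective (mkALinear φ hM hN π) fun x => ⟨ι x, ?_⟩
  have := LinearMap.congr_fun hsplit x
  simpa using this

include hM hN in
theorem freeA_of_split [IsLocalRing A] (ι : N →ₗ[R] M) (π : M →ₗ[R] N)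
    (hsplit : π ∘ₗ ι = LinearMap.id) [Module.Finite A M] [Module.Free A M] :
    Module.Free A N := by
  haveI : Module.Projective A N := by
    refine Module.Projective.of_split (mkALinear φ hN hM ι) (mkALinear φ hM hN π) ?_
    ext x
    simpa using LinearMap.congr_fun hsplit x
  haveI : Module.Finite A N := finiteA_of_split φ hM hN ι π hsplit
  haveI : Module.FinitePresentation A N := Module.finitePresentation_of_projective A N
  exact Module.free_of_flat_of_isLocalRing

end Transfer

section Ext

variable {A : Type u} [CommRing A]
variable {L M N : Type u}
  [AddCommGroup L] [Module A L] [AddCommGroup M] [Module A M] [AddCommGroup N] [Module A N]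

theorem extension_freeA (f : L →ₗ[A] M) (g : M →ₗ[A] N)
    (hf : Function.Injective f) (hg : Function.Surjective g) (hfg : Function.Exact f g)
    [Module.Finite A L] [Module.Free A L] [Module.Finite A N] [Module.Free A N] :
    Module.Finite A M ∧ Module.Free A M := by
  obtain ⟨σ, hσ⟩ := Module.projective_lifting_property g (LinearMap.id : N →ₗ[A] N) hg
  let ψ : L × N →ₗ[A] M := f ∘ₗ LinearMap.fst A L N + σ ∘ₗ LinearMap.snd A L N
  have hσ' : ∀ x, g (σ x) = x := fun x => by
    simpa using LinearMap.congr_fun hσ x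
  have hψ : Function.Bijective ψ := by
    constructor
    · rintro ⟨x₁, x₂⟩ ⟨y₁, y₂⟩ hxy
      simp only [ψ, LinearMap.add_apply, LinearMap.coe_comp, Function.comp_apply,
        LinearMap.fst_apply, LinearMap.snd_apply] at hxy
      have h2 : x₂ = y₂ := by
        have := congrArg g hxy
        simpa [map_add, hfg.apply_apply_eq_zero, hσ'] using this
      subst h2
      have h1 : f x₁ = f y₁ := by
        have := add_right_cancel hxy
        exact this
      rw [hf h1]
    · intro m
      obtain ⟨x₁, hx₁⟩ := (hfg (m - σ (g m))).mp (by
        rw [map_sub, hσ' (g m), sub_self])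
      refine ⟨⟨x₁, g m⟩, ?_⟩
      simp only [ψ, LinearMap.add_apply, LinearMap.coe_comp, Function.comp_apply,
        LinearMap.fst_apply, LinearMap.snd_apply, hx₁]
      abel
  let eψ := LinearEquiv.ofBijective ψ hψ
  constructor
  · exact Module.Finite.equiv eψ
  · exact Module.Free.of_equiv eψ

end Ext

section MAIN

variable {k : Type u} [Field k] {n l : ℕ}

local notation "S" => MvPowerSeries (Fin (n + 1)) k

set_option maxHeartbeats 2000000 in
set_option synthInstance.maxHeartbeats 200000 in
theorem main_thm (hn : 1 ≤ n)
    (𝔞 : Ideal (MvPowerSeries (Fin (n + 1)) k)) (hl : 1 ≤ l)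
    (hY : MvPowerSeries.X (Fin.last n) ^ (l + 1) ∈ 𝔞)
    (ha : 𝔞 ≤ (Ideal.span (Set.range (MvPowerSeries.X :
      Fin (n + 1) → MvPowerSeries (Fin (n + 1)) k))) ^ (l + 1)) :
    HasNontrivialExtClosedSubcat (MvPowerSeries (Fin (n + 1)) k ⧸ 𝔞) := by
  classical
  set R := MvPowerSeries (Fin (n + 1)) k ⧸ 𝔞 with hR
  set Y : S := MvPowerSeries.X (Fin.last n) with hYdef
  set A := Adef k l with hA
  haveI : IsLocalRing A := Adef_local k l
  haveI : Nontrivial A := Adef_nontrivial k l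
  set IA : Ideal (Polynomial k) := Ideal.span {(Polynomial.X : Polynomial k) ^ (l + 1)} with hIA
  set mkA : Polynomial k →+* A := Ideal.Quotient.mk IA with hmkA
  set mka : MvPowerSeries (Fin (n + 1)) k →+* R := Ideal.Quotient.mk 𝔞 with hmka
  -- the ring hom `φ : A → R` sending the variable to the image of `Y`
  have hker : ∀ p ∈ IA, (mka.comp (Polynomial.aeval Y : Polynomial k →ₐ[k] S).toRingHom) p = 0 := by
    intro p hp
    obtain ⟨q, rfl⟩ := Ideal.mem_span_singleton.mp hp
    show mka (Polynomial.aeval Y (Polynomial.X ^ (l + 1) * q)) = 0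
    rw [map_mul, map_pow, Polynomial.aeval_X, hmka, Ideal.Quotient.eq_zero_iff_mem]
    exact Ideal.mul_mem_right _ _ hY
  set φ : A →+* R :=
    Ideal.Quotient.lift IA (mka.comp (Polynomial.aeval Y : Polynomial k →ₐ[k] S).toRingHom) hker
    with hφ
  have hφmk : ∀ p : Polynomial k, φ (mkA p) = mka (Polynomial.aeval Y p) := fun p => rfl
  -- the ideal `𝔠` and the module `M₀`
  set 𝔠 : Ideal (MvPowerSeries (Fin (n + 1)) k) := cdef k n l with hc
  have hac : 𝔞 ≤ 𝔠 := le_trans ha spanX_pow_le_cdef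
  have hYc : Y ^ (l + 1) ∈ 𝔠 := Ideal.subset_span (Set.mem_union_right _ rfl)
  have hJc : ∀ i : Fin n, (MvPowerSeries.X i.castSucc : S) ∈ 𝔠 :=
    fun i => Ideal.subset_span (Set.mem_union_left _ ⟨i, rfl⟩)
  have hJc' : Jdef k n ≤ 𝔠 := by
    rw [Jdef, Ideal.span_le]
    rintro x ⟨i, rfl⟩
    exact hJc i
  set 𝔠' : Ideal R := 𝔠.map mka with hc'
  set M₀ := R ⧸ 𝔠' with hM₀
  letI instA0 : Module A M₀ := Module.compHom M₀ φ
  -- the comparison map `e : A → M₀`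
  set e : A →ₗ[A] M₀ :=
    { toFun := fun a => Submodule.Quotient.mk (φ a)
      map_add' := fun a b => by
        show Submodule.Quotient.mk (φ (a + b)) = _
        rw [map_add]
        rfl
      map_smul' := fun a b => by
        show (Submodule.Quotient.mk (φ (a * b)) : M₀) = a • (Submodule.Quotient.mk (φ b) : M₀)
        rw [map_mul]
        with_unfolding_all rfl } with he
  have hesurj : Function.Surjective e := by
    intro x
    obtain ⟨r, rfl⟩ := Submodule.Quotient.mk_surjective _ x
    obtain ⟨s, rfl⟩ := Ideal.Quotient.mk_surjective r
    obtain ⟨p, h', hph⟩ := ps_iterate (l + 1) s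
    refine ⟨mkA p, ?_⟩
    show Submodule.Quotient.mk (φ (mkA p)) = Submodule.Quotient.mk (mka s)
    rw [Submodule.Quotient.eq, hφmk]
    have hdiff : Polynomial.aeval Y p - s ∈ 𝔠 := by
      have h1 : s - (Polynomial.aeval Y p + Y ^ (l + 1) * h') ∈ 𝔠 := hJc' hph
      have h2 : Y ^ (l + 1) * h' ∈ 𝔠 := Ideal.mul_mem_right _ _ hYc
      have : Polynomial.aeval Y p - s
          = -((s - (Polynomial.aeval Y p + Y ^ (l + 1) * h')) + Y ^ (l + 1) * h') := by ring
      rw [this]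
      exact neg_mem (Ideal.add_mem _ h1 h2)
    have : mka (Polynomial.aeval Y p) - mka s = mka (Polynomial.aeval Y p - s) := by
      rw [map_sub]
    rw [this]
    exact Ideal.mem_map_of_mem mka hdiff
  have heinj : Function.Injective e := by
    have hzero : ∀ a : A, e a = 0 → a = 0 := by
      intro a hea
      obtain ⟨p, rfl⟩ := Ideal.Quotient.mk_surjective a
      have h1 : φ (mkA p) ∈ 𝔠' := by
        rw [← Submodule.Quotient.mk_eq_zero]
        exact hea
      rw [hφmk, hc'] at h1
      obtain ⟨y, hy, hyeq⟩ := Ideal.mem_map_iff_of_surjective mka Ideal.Quotient.mk_surjective |>.mp h1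
      have h2 : Polynomial.aeval Y p ∈ 𝔠 := by
        have hsub : Polynomial.aeval Y p - y ∈ 𝔞 := by
          rw [← Ideal.Quotient.mk_eq_mk_iff_sub_mem]
          exact hyeq.symm
        have : Polynomial.aeval Y p = y + (Polynomial.aeval Y p - y) := by ring
        rw [this]
        exact Ideal.add_mem _ hy (hac hsub)
      have hcoeff : ∀ i ≤ l, p.coeff i = 0 := by
        intro i hi
        rw [← coeff_aeval p i]
        exact coeff_eq_zero_of_mem_cdef h2 hi
      erw [Ideal.Quotient.eq_zero_iff_mem, Ideal.mem_span_singleton, Polynomial.X_pow_dvd_iff]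
      intro d hd
      exact hcoeff d (Nat.lt_succ_iff.mp hd)
    intro a b hab
    have : e (a - b) = 0 := by rw [map_sub, hab, sub_self]
    exact sub_eq_zero.mp (hzero _ this)
  set eEquiv : A ≃ₗ[A] M₀ := LinearEquiv.ofBijective e ⟨heinj, hesurj⟩ with heEquiv
  haveI hM₀finA : Module.Finite A M₀ := Module.Finite.equiv eEquiv
  haveI hM₀freeA : Module.Free A M₀ := Module.Free.of_equiv eEquiv
  haveI hM₀finR : Module.Finite R M₀ :=
    Module.Finite.of_surjective 𝔠'.mkQ (Submodule.Quotient.mk_surjective _)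
  haveI hM₀nontriv : Nontrivial M₀ := heinj.nontrivial
  -- the subcategory
  set P : ModulePred R := fun M _ _ =>
    letI := Module.compHom M φ
    Module.Finite A M ∧ Module.Free A M with hP
  have hPM₀ : P M₀ := ⟨hM₀finA, hM₀freeA⟩
  refine ⟨P, ⟨?_, ?_, ?_, ?_, ?_⟩, ?_, ?_, ?_⟩
  · -- P implies finite
    intro M _ _ hPM
    letI := Module.compHom M φ
    obtain ⟨h1, h2⟩ := hPM
    exact finiteR_of_finiteA φ (fun _ _ => by with_unfolding_all rfl) (M := M)
  · -- iso closed
    intro M N _ _ _ _ ⟨eMN⟩ hPM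
    letI := Module.compHom M φ
    letI := Module.compHom N φ
    obtain ⟨h1, h2⟩ := hPM
    let eA := mkAEquiv φ (fun _ _ => by with_unfolding_all rfl) (fun _ _ => by with_unfolding_all rfl) eMN
    exact ⟨Module.Finite.equiv eA, Module.Free.of_equiv eA⟩
  · -- nonempty
    exact ⟨M₀, inferInstance, inferInstance, hPM₀⟩
  · -- summands
    intro M N _ _ _ _ hPM ⟨ι, π, hsplit⟩
    letI := Module.compHom M φ
    letI := Module.compHom N φ
    obtain ⟨h1, h2⟩ := hPM
    exact ⟨finiteA_of_split φ (fun _ _ => by with_unfolding_all rfl) (fun _ _ => by with_unfolding_all rfl) ι π hsplit,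
      freeA_of_split φ (fun _ _ => by with_unfolding_all rfl) (fun _ _ => by with_unfolding_all rfl) ι π hsplit⟩
  · -- extensions
    intro L M N _ _ _ _ _ _ f g hf hg hfg hPL hPN
    letI := Module.compHom L φ
    letI := Module.compHom M φ
    letI := Module.compHom N φ
    obtain ⟨hL1, hL2⟩ := hPL
    obtain ⟨hN1, hN2⟩ := hPN
    let fA := mkALinear φ (fun _ _ => by with_unfolding_all rfl) (fun _ _ => by with_unfolding_all rfl) f
    let gA := mkALinear φ (fun _ _ => by with_unfolding_all rfl) (fun _ _ => by with_unfolding_all rfl) g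
    exact extension_freeA fA gA hf hg hfg
  · -- not the zero subcategory
    intro hzero
    have h := (hzero M₀ hM₀finR).mp hPM₀
    exact not_subsingleton M₀ h
  · -- not add R
    intro haddR
    have hfree : Module.Free R M₀ := (haddR M₀ hM₀finR).mp hPM₀
    set i0 : Fin n := ⟨0, hn⟩ with hi0
    set x0 : S := MvPowerSeries.X i0.castSucc with hx0def
    have hx0kill : ∀ v : M₀, mka x0 • v = 0 := by
      intro v
      obtain ⟨r, rfl⟩ := Submodule.Quotient.mk_surjective _ v
      obtain ⟨s, rfl⟩ := Ideal.Quotient.mk_surjective r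
      show mka x0 • Submodule.Quotient.mk (mka s) = 0
      rw [← Submodule.Quotient.mk_smul, Submodule.Quotient.mk_eq_zero]
      have : mka x0 • mka s = mka (x0 * s) := by rw [smul_eq_mul, ← map_mul]
      rw [this]
      exact Ideal.mem_map_of_mem mka (Ideal.mul_mem_right _ _ (hJc i0))
    have hx0zero : mka x0 = 0 := by
      let b := Module.Free.chooseBasis R M₀
      obtain ⟨i⟩ := b.index_nonempty
      have h0 := hx0kill (b i)
      have h1 := congrArg b.repr h0
      rw [map_smul, map_zero, Module.Basis.repr_self, Finsupp.smul_single_one] at h1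
      exact Finsupp.single_eq_zero.mp h1
    have hx0a : x0 ∈ 𝔞 := by
      rwa [show mka x0 = Ideal.Quotient.mk 𝔞 x0 from rfl,
        Ideal.Quotient.eq_zero_iff_mem] at hx0zero
    have : x0 ∈ (Ideal.span (Set.range (MvPowerSeries.X :
        Fin (n + 1) → MvPowerSeries (Fin (n + 1)) k))) ^ 2 :=
      Ideal.pow_le_pow_right (by omega) (ha hx0a)
    exact X_not_mem_spanX_sq i0.castSucc this
  · -- not mod R
    intro hmod
    set mI : Ideal R := (Ideal.span (Set.range (MvPowerSeries.X :
      Fin (n + 1) → MvPowerSeries (Fin (n + 1)) k))).map mka with hmI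
    set K := R ⧸ mI with hK
    haveI : Module.Finite R K :=
      Module.Finite.of_surjective mI.mkQ (Submodule.Quotient.mk_surjective _)
    have hIconst : ∀ f ∈ Ideal.span (Set.range (MvPowerSeries.X :
        Fin (n + 1) → MvPowerSeries (Fin (n + 1)) k)), constantCoeff f = 0 := by
      intro f hf
      have hle : Ideal.span (Set.range (MvPowerSeries.X :
          Fin (n + 1) → MvPowerSeries (Fin (n + 1)) k))
          ≤ RingHom.ker (constantCoeff (σ := Fin (n + 1)) (R := k)) := by
        rw [Ideal.span_le]
        rintro x ⟨i, rfl⟩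
        exact constantCoeff_X i
      exact hle hf
    haveI hKnontriv : Nontrivial K := by
      refine Submodule.Quotient.nontrivial_iff.mpr ?_
      intro htop
      have h1 : (1 : R) ∈ mI := htop ▸ Submodule.mem_top
      obtain ⟨y, hy, hyeq⟩ :=
        Ideal.mem_map_iff_of_surjective mka Ideal.Quotient.mk_surjective |>.mp h1
      have hsub : y - 1 ∈ 𝔞 := by
        rw [← Ideal.Quotient.mk_eq_mk_iff_sub_mem, map_one]
        exact hyeq
      have hone : (1 : S) ∈ Ideal.span (Set.range (MvPowerSeries.X :
          Fin (n + 1) → MvPowerSeries (Fin (n + 1)) k)) := by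
        have h2 : y - (y - 1) = 1 := by ring
        rw [← h2]
        refine Ideal.sub_mem _ hy ?_
        exact Ideal.pow_le_self (Nat.succ_ne_zero l) (ha hsub)
      have := hIconst 1 hone
      rw [map_one] at this
      exact one_ne_zero this
    have hPK := hmod K inferInstance
    letI := Module.compHom K φ
    obtain ⟨hKfinA, hKfreeA⟩ := hPK
    have hYkill : ∀ v : K, mka Y • v = 0 := by
      intro v
      obtain ⟨r, rfl⟩ := Submodule.Quotient.mk_surjective _ v
      obtain ⟨s, rfl⟩ := Ideal.Quotient.mk_surjective r
      show mka Y • Submodule.Quotient.mk (mka s) = 0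
      rw [← Submodule.Quotient.mk_smul, Submodule.Quotient.mk_eq_zero]
      have : mka Y • mka s = mka (Y * s) := by rw [smul_eq_mul, ← map_mul]
      rw [this]
      exact Ideal.mem_map_of_mem mka
        (Ideal.mul_mem_right _ _ (Ideal.subset_span ⟨Fin.last n, rfl⟩))
    have hXzero : mkA Polynomial.X = 0 := by
      let b := Module.Free.chooseBasis A K
      obtain ⟨i⟩ := b.index_nonempty
      have h0 : mkA Polynomial.X • b i = 0 := by
        have hsmul : mkA Polynomial.X • b i = φ (mkA Polynomial.X) • b i := by
          with_unfolding_all rfl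
        rw [hsmul, hφmk, Polynomial.aeval_X]
        exact hYkill (b i)
      have h1 := congrArg b.repr h0
      rw [map_smul, map_zero, Module.Basis.repr_self, Finsupp.smul_single_one] at h1
      exact Finsupp.single_eq_zero.mp h1
    erw [show mkA Polynomial.X = Ideal.Quotient.mk IA Polynomial.X from rfl,
      Ideal.Quotient.eq_zero_iff_mem,
      show IA = Ideal.span {(Polynomial.X : Polynomial k) ^ (l + 1)} from hIA,
      Ideal.mem_span_singleton, Polynomial.X_pow_dvd_iff] at hXzero
    have := hXzero 1 (by omega)
    rw [Polynomial.coeff_X_one] at this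
    exact one_ne_zero this

end MAIN

/-- Let `R = k[[X₁,…,X_n,Y]]/𝔞` be a residue ring of a formal power series ring over a
field `k` with `n ≥ 1` (the variables are indexed by `Fin (n+1)`, `Y` being the last one).
If `Y^(l+1) ∈ 𝔞 ⊆ (X₁,…,X_n,Y)^(l+1)` for some `l ≥ 1`, then `mod R` has a nontrivial
extension-closed subcategory. -/
theorem stmt_7 (k : Type u) [Field k] (n : ℕ) (hn : 1 ≤ n)
    (𝔞 : Ideal (MvPowerSeries (Fin (n + 1)) k)) (l : ℕ) (hl : 1 ≤ l)
    (hY : MvPowerSeries.X (Fin.last n) ^ (l + 1) ∈ 𝔞)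
    (ha : 𝔞 ≤ (Ideal.span (Set.range (MvPowerSeries.X :
      Fin (n + 1) → MvPowerSeries (Fin (n + 1)) k))) ^ (l + 1)) :
    HasNontrivialExtClosedSubcat (MvPowerSeries (Fin (n + 1)) k ⧸ 𝔞) := by
  exact main_thm hn 𝔞 hl hY ha
end

section
/- Let X be a nonzero finitely generated R-module and let p, q ≥ 1. If some finitely generated R-module belongs to both filtᵖX and filt^qX, then p = q. -/
universe u

/-- `Filt R X n M` means that `M` belongs to `filtⁿ X`: `filt¹ X` consists of the modules
isomorphic to `X`, and for `n ≥ 2`, `filtⁿ X` consists of the modules `M` admitting a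
short exact sequence `0 → Y → M → X → 0` with `Y ∈ filtⁿ⁻¹ X`. -/
inductive Filt (R : Type u) [CommRing R] (X : Type u) [AddCommGroup X] [Module R X] :
    ℕ → ∀ (M : Type u) [AddCommGroup M] [Module R M], Prop
  | isom {M : Type u} [AddCommGroup M] [Module R M] (e : M ≃ₗ[R] X) : Filt R X 1 M
  | ext {n : ℕ} {Y M : Type u} [AddCommGroup Y] [Module R Y] [AddCommGroup M] [Module R M]
      (hY : Filt R X n Y) (f : Y →ₗ[R] M) (g : M →ₗ[R] X)
      (hf : Function.Injective f) (hg : Function.Surjective g)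
      (hfg : Function.Exact f g) : Filt R X (n + 1) M


open Submodule

variable {R : Type u} [CommRing R] {Y M X : Type u}
  [AddCommGroup Y] [Module R Y] [AddCommGroup M] [Module R M] [AddCommGroup X] [Module R X]

lemma covBy_map (f : Y →ₗ[R] M) (hf : Function.Injective f) {A B : Submodule R Y}
    (h : A ⋖ B) : A.map f ⋖ B.map f := by
  constructor
  · exact lt_of_le_of_ne (Submodule.map_mono h.1.le)
      (fun e => h.1.ne (Submodule.map_injective_of_injective hf e))
  · intro Z h1 h2
    have hZ : Z ≤ LinearMap.range f := h2.le.trans (by rw [← Submodule.map_top]; exact Submodule.map_mono le_top)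
    have hZ' : Submodule.map f (Submodule.comap f Z) = Z := Submodule.map_comap_eq_self hZ
    refine h.2 (c := Submodule.comap f Z) ?_ ?_
    · refine lt_of_le_of_ne ?_ ?_
      · rw [← Submodule.comap_map_eq_of_injective hf A]; exact Submodule.comap_mono h1.le
      · rintro rfl; rw [hZ'] at h1; exact h1.ne rfl
    · refine lt_of_le_of_ne ?_ ?_
      · rw [← Submodule.comap_map_eq_of_injective hf B]; exact Submodule.comap_mono h2.le
      · intro e; apply h2.ne; rw [← hZ', e]

lemma covBy_comap (g : M →ₗ[R] X) (hg : Function.Surjective g) {A B : Submodule R X}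
    (h : A ⋖ B) : A.comap g ⋖ B.comap g := by
  have hker : ∀ C : Submodule R X, LinearMap.ker g ≤ C.comap g := fun C =>
    (LinearMap.ker_le_comap g)
  constructor
  · exact lt_of_le_of_ne (Submodule.comap_mono h.1.le)
      (fun e => h.1.ne (Submodule.comap_injective_of_surjective hg e))
  · intro Z h1 h2
    have hZ : Submodule.comap g (Submodule.map g Z) = Z :=
      Submodule.comap_map_eq_self ((hker A).trans h1.le)
    refine h.2 (c := Submodule.map g Z) ?_ ?_
    · refine lt_of_le_of_ne ?_ ?_
      · rw [← Submodule.map_comap_eq_of_surjective hg A]; exact Submodule.map_mono h1.le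
      · rintro rfl; rw [hZ] at h1; exact h1.ne rfl
    · refine lt_of_le_of_ne ?_ ?_
      · rw [← Submodule.map_comap_eq_of_surjective hg B]; exact Submodule.map_mono h2.le
      · intro e; apply h2.ne; rw [← hZ, e]

/-- Map a composition series along an injective linear map. -/
noncomputable def csMap (f : Y →ₗ[R] M) (hf : Function.Injective f)
    (s : CompositionSeries (Submodule R Y)) : CompositionSeries (Submodule R M) :=
  s.map ⟨fun A => A.map f, fun h => covBy_map f hf h⟩

/-- Map a composition series along comap of a surjective linear map. -/
noncomputable def csComap (g : M →ₗ[R] X) (hg : Function.Surjective g)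
    (s : CompositionSeries (Submodule R X)) : CompositionSeries (Submodule R M) :=
  s.map ⟨fun A => A.comap g, fun h => covBy_comap g hg h⟩

lemma filt_cs {n : ℕ} (h : Filt R X n M)
    (sX : CompositionSeries (Submodule R X)) (h0 : sX.head = ⊥) (h1 : sX.last = ⊤) :
    ∃ s : CompositionSeries (Submodule R M),
      s.head = ⊥ ∧ s.last = ⊤ ∧ s.length = n * sX.length := by
  induction h with
  | @isom M _ _ e =>
    refine ⟨csMap e.symm.toLinearMap e.symm.injective sX, ?_, ?_, ?_⟩
    · show Submodule.map _ sX.head = ⊥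
      rw [h0, Submodule.map_bot]
    · show Submodule.map _ sX.last = ⊤
      rw [h1, Submodule.map_top]
      exact LinearMap.range_eq_top.mpr e.symm.surjective
    · simp [csMap, RelSeries.map]
  | @ext n Y M _ _ _ _ hY f g hf hg hfg ih =>
    obtain ⟨sY, hY0, hY1, hYlen⟩ := ih
    have hconn : (csMap f hf sY).last = (csComap g hg sX).head := by
      show Submodule.map f sY.last = Submodule.comap g sX.head
      rw [hY1, h0, Submodule.map_top, Submodule.comap_bot,
        LinearMap.exact_iff.mp hfg]
    refine ⟨(csMap f hf sY).smash (csComap g hg sX) hconn, ?_, ?_, ?_⟩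
    · rw [RelSeries.head_smash]
      show Submodule.map f sY.head = ⊥
      rw [hY0, Submodule.map_bot]
    · rw [RelSeries.last_smash]
      show Submodule.comap g sX.last = ⊤
      rw [h1, Submodule.comap_top]
    · show (csMap f hf sY).length + (csComap g hg sX).length = _
      simp only [csMap, csComap, RelSeries.map, hYlen]
      ring

section Localize

variable (S : Submonoid R)

lemma filt_localize {n : ℕ} (h : Filt R X n M) :
    Filt (Localization S) (LocalizedModule S X) n (LocalizedModule S M) := by
  induction h with
  | @isom M _ _ e =>
    refine Filt.isom (LinearEquiv.ofBijective
      ((IsLocalizedModule.map S (LocalizedModule.mkLinearMap S M)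
        (LocalizedModule.mkLinearMap S X) e.toLinearMap).extendScalarsOfIsLocalization S
        (Localization S)) ⟨?_, ?_⟩)
    · exact IsLocalizedModule.map_injective S _ _ _ e.injective
    · exact IsLocalizedModule.map_surjective S _ _ _ e.surjective
  | @ext n Y M _ _ _ _ hY f g hf hg hfg ih =>
    exact Filt.ext ih
      ((IsLocalizedModule.map S (LocalizedModule.mkLinearMap S Y)
        (LocalizedModule.mkLinearMap S M) f).extendScalarsOfIsLocalization S (Localization S))
      ((IsLocalizedModule.map S (LocalizedModule.mkLinearMap S M)
        (LocalizedModule.mkLinearMap S X) g).extendScalarsOfIsLocalization S (Localization S))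
      (IsLocalizedModule.map_injective S _ _ _ hf)
      (IsLocalizedModule.map_surjective S _ _ _ hg)
      (IsLocalizedModule.map_exact S _ _ _ f g hfg)

end Localize

lemma isArtinian_of_torsion_max (R : Type u) [CommRing R] [IsLocalRing R]
    (V : Type u) [AddCommGroup V] [Module R V] [Module.Finite R V]
    (h : Module.IsTorsionBySet R V (IsLocalRing.maximalIdeal R : Set R)) : IsArtinian R V := by
  letI : Module (R ⧸ IsLocalRing.maximalIdeal R) V := h.module
  haveI : IsScalarTower R (R ⧸ IsLocalRing.maximalIdeal R) V := h.isScalarTower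
  haveI : Module.Finite (R ⧸ IsLocalRing.maximalIdeal R) V :=
    Module.Finite.of_restrictScalars_finite R (R ⧸ IsLocalRing.maximalIdeal R) V
  haveI : IsArtinianRing (R ⧸ IsLocalRing.maximalIdeal R) := by
    letI := Ideal.Quotient.field (IsLocalRing.maximalIdeal R)
    exact @DivisionRing.instIsArtinianRing _ (Field.toDivisionRing)
  haveI h2 : IsArtinian (R ⧸ IsLocalRing.maximalIdeal R) V := isArtinian_of_fg_of_artinian'
  let f : Submodule R V → Submodule (R ⧸ IsLocalRing.maximalIdeal R) V := fun p =>
    { p.toAddSubmonoid with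
      smul_mem' := fun c {x} hx => by
        obtain ⟨r, rfl⟩ := Ideal.Quotient.mk_surjective c
        show ((Ideal.Quotient.mk (IsLocalRing.maximalIdeal R) r : R ⧸ _) • x) ∈ p
        rw [Module.IsTorsionBySet.mk_smul h r x]
        exact p.smul_mem r hx }
  have hf : StrictMono f := by
    intro a b hab
    rw [lt_iff_le_not_ge] at hab ⊢
    exact ⟨fun x hx => hab.1 hx, fun hba => hab.2 fun x hx => hba hx⟩
  exact hf.wellFoundedLT

lemma artinian_of_pow_max_le_ann (R : Type u) [CommRing R] [IsNoetherianRing R] [IsLocalRing R]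
    (n : ℕ) (N : Type u) [AddCommGroup N] [Module R N] [Module.Finite R N]
    (h : (IsLocalRing.maximalIdeal R) ^ n ≤ Module.annihilator R N) : IsArtinian R N := by
  induction n generalizing N with
  | zero =>
    rw [pow_zero, Ideal.one_eq_top] at h
    have : Subsingleton N := by
      refine subsingleton_of_forall_eq 0 fun m => ?_
      have := Module.mem_annihilator.mp (h (Submodule.mem_top (x := (1:R)))) m
      simpa using this
    infer_instance
  | succ n ih =>
    set m := IsLocalRing.maximalIdeal R
    set N₁ : Submodule R N := m • ⊤
    have hNoeth : IsNoetherian R N := isNoetherian_of_isNoetherianRing_of_finite R N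
    have hfin : Module.Finite R N₁ := Module.Finite.iff_fg.mpr (IsNoetherian.noetherian N₁)
    have hannN₁ : m ^ n ≤ Module.annihilator R N₁ := by
      intro r hr
      rw [Module.mem_annihilator]
      rintro ⟨x, hx⟩
      refine Subtype.ext ?_
      show r • x = 0
      refine Submodule.smul_induction_on hx ?_ ?_
      · intro a ha y _
        rw [smul_smul]
        exact Module.mem_annihilator.mp (h (by rw [pow_succ]; exact Ideal.mul_mem_mul hr ha)) y
      · intro x y hxy hy
        rw [smul_add, hxy, hy, add_zero]
    have hart₁ : IsArtinian R N₁ := ih N₁ hannN₁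
    have htor : Module.IsTorsionBySet R (N ⧸ N₁) (m : Set R) := by
      intro x a
      obtain ⟨y, rfl⟩ := Submodule.Quotient.mk_surjective N₁ x
      rw [← Submodule.Quotient.mk_smul, Submodule.Quotient.mk_eq_zero]
      exact Submodule.smul_mem_smul a.2 Submodule.mem_top
    have hart₂' : IsArtinian R (N ⧸ N₁) := isArtinian_of_torsion_max R (N ⧸ N₁) htor
    exact (isArtinian_iff_submodule_quotient N₁).mpr ⟨hart₁, hart₂'⟩

/-- Let `X` be a nonzero finitely generated module over the Noetherian local ring `R` and
`p, q ≥ 1`.  If some finitely generated `R`-module belongs to both `filtᵖ X` and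
`filt^q X`, then `p = q`. -/
theorem stmt_11 (R : Type u) [CommRing R] [IsNoetherianRing R] [IsLocalRing R]
    (X : Type u) [AddCommGroup X] [Module R X] [Module.Finite R X] (hX : Nontrivial X)
    (p q : ℕ) (hp : 1 ≤ p) (hq : 1 ≤ q)
    (M : Type u) [AddCommGroup M] [Module R M] [Module.Finite R M]
    (hMp : Filt R X p M) (hMq : Filt R X q M) : p = q := by
  classical
  -- choose a minimal prime over the annihilator of X
  have hIne : Module.annihilator R X ≠ ⊤ := by
    intro e
    have h1 : (1 : R) ∈ Module.annihilator R X := e ▸ Submodule.mem_top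
    obtain ⟨x, y, hxy⟩ := hX
    apply hxy
    have hx := Module.mem_annihilator.mp h1 x
    have hy := Module.mem_annihilator.mp h1 y
    rw [one_smul] at hx hy
    rw [hx, hy]
  obtain ⟨J, hJmax, hJ⟩ := Ideal.exists_le_maximal _ hIne
  haveI := hJmax.isPrime
  obtain ⟨P, hP, -⟩ := Ideal.exists_minimalPrimes_le hJ
  haveI hPprime : P.IsPrime := hP.1.1
  set S := P.primeCompl with hS
  let R' := Localization.AtPrime P
  let X' := LocalizedModule S X
  let M' := LocalizedModule S M
  -- basic instances
  haveI : IsNoetherianRing R' := IsLocalization.isNoetherianRing S R' inferInstance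
  haveI : Module.Finite R' X' :=
    Module.Finite.of_isLocalizedModule S (LocalizedModule.mkLinearMap S X)
  -- X' is nontrivial
  haveI hX' : Nontrivial X' := by
    have hmem : (⟨P, hPprime⟩ : PrimeSpectrum R) ∈ Module.support R X := by
      rw [Module.support_eq_zeroLocus]
      exact hP.1.2
    exact (Module.mem_support_iff (p := ⟨P, hPprime⟩)).mp hmem
  -- the annihilator of X maps into the annihilator of X'
  have hann : ∀ r ∈ Module.annihilator R X,
      algebraMap R R' r ∈ Module.annihilator R' X' := by
    intro r hr
    rw [Module.mem_annihilator] at hr ⊢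
    intro mx
    induction mx using LocalizedModule.induction_on with
    | h x s =>
      rw [algebraMap_smul]
      show r • LocalizedModule.mk x s = 0
      rw [LocalizedModule.smul'_mk, hr x, LocalizedModule.zero_mk]
  -- the maximal ideal of R' is contained in the radical of the annihilator of X'
  have hmax : IsLocalRing.maximalIdeal R' ≤ (Module.annihilator R' X').radical := by
    rw [Ideal.radical_eq_sInf]
    refine le_sInf ?_
    rintro Q ⟨hle, hQp⟩
    haveI := hQp
    have hq1 : Ideal.comap (algebraMap R R') Q ≤ P := by
      intro r hr
      by_contra hrP
      have hu : IsUnit (algebraMap R R' r) :=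
        IsLocalization.map_units R' (⟨r, hrP⟩ : S)
      exact hQp.ne_top (Ideal.eq_top_of_isUnit_mem _ hr hu)
    have hq2 : Module.annihilator R X ≤ Ideal.comap (algebraMap R R') Q :=
      fun r hr => hle (hann r hr)
    have hqP : Ideal.comap (algebraMap R R') Q = P :=
      le_antisymm hq1 (hP.2 ⟨Ideal.IsPrime.comap _, hq2⟩ hq1)
    have h1 : Ideal.map (algebraMap R R') (Ideal.comap (algebraMap R R') Q) = Q :=
      IsLocalization.map_comap S R' Q
    have h2 : Q = IsLocalRing.maximalIdeal R' := by
      rw [← h1, hqP]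
      exact Localization.AtPrime.map_eq_maximalIdeal
    exact h2.ge
  -- X' is Artinian, hence has a composition series
  obtain ⟨n, hn⟩ := Ideal.exists_pow_le_of_le_radical_of_fg hmax (IsNoetherian.noetherian _)
  haveI hXart : IsArtinian R' X' := artinian_of_pow_max_le_ann R' n X' hn
  haveI hXnoe : IsNoetherian R' X' := isNoetherian_of_isNoetherianRing_of_finite R' X'
  obtain ⟨sX, hsX0, hsX1⟩ := exists_compositionSeries_of_isNoetherian_isArtinian R' X'
  -- its length is positive
  have hlen : 0 < sX.length := by
    refine Nat.pos_of_ne_zero fun h0 => ?_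
    have hfin : (0 : Fin (sX.length + 1)) = Fin.last sX.length := by
      ext; simp [h0]
    have : sX.head = sX.last := by
      rw [RelSeries.head, RelSeries.last, ← hfin]
    rw [hsX0, hsX1] at this
    · exfalso
      obtain ⟨x, y, hxy⟩ := hX'
      apply hxy
      have hx : x ∈ (⊥ : Submodule R' X') := this ▸ Submodule.mem_top
      have hy : y ∈ (⊥ : Submodule R' X') := this ▸ Submodule.mem_top
      rw [Submodule.mem_bot] at hx hy
      rw [hx, hy]
  -- localize the two filtrations and compare lengths of composition series
  obtain ⟨sp, hsp0, hsp1, hsplen⟩ := filt_cs (filt_localize S hMp) sX hsX0 hsX1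
  obtain ⟨sq, hsq0, hsq1, hsqlen⟩ := filt_cs (filt_localize S hMq) sX hsX0 hsX1
  have heq : sp.length = sq.length :=
    (CompositionSeries.jordan_holder sp sq (hsp0.trans hsq0.symm)
      (hsp1.trans hsq1.symm)).length_eq
  rw [hsplen, hsqlen] at heq
  exact Nat.eq_of_mul_eq_mul_right hlen heq
end

section
/- Let X be a nonzero finitely generated R-module and let 0 → L → M → N → 0 be a short exact sequence of finitely generated R-modules. If L belongs to filtᵖX and N belongs to filt^qX, then M belongs to filtᵖ⁺qX. Consequently, the subcategory filt X is closed under extensions. -/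
universe u

theorem filt_aux (R : Type u) [CommRing R] (X : Type u) [AddCommGroup X] [Module R X]
    {q : ℕ} {N : Type u} [AddCommGroup N] [Module R N] (hN : Filt R X q N) :
    ∀ (p : ℕ) (L M : Type u) [AddCommGroup L] [Module R L] [AddCommGroup M] [Module R M]
      (f : L →ₗ[R] M) (g : M →ₗ[R] N), Function.Injective f → Function.Surjective g →
      Function.Exact f g → Filt R X p L → Filt R X (p + q) M := by
  induction hN with
  | isom e =>
    intro p L M _ _ _ _ f g hf hg hfg hL
    refine Filt.ext hL f (e.toLinearMap.comp g) hf (e.surjective.comp hg) ?_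
    intro m
    rw [LinearMap.comp_apply]
    constructor
    · intro h
      have : g m = 0 := e.injective (by simpa using h)
      exact (hfg m).mp this
    · intro h
      have : g m = 0 := (hfg m).mpr h
      simp [this]
  | @ext n Y N' _ _ _ _ hY f' g' hf' hg' hfg' ih =>
    intro p L M _ _ _ _ f g hf hg hfg hL
    -- K = ker (g' ∘ g)
    set K : Submodule R M := LinearMap.ker (g'.comp g) with hK
    have hmemK : ∀ l : L, f l ∈ K := by
      intro l
      have : g (f l) = 0 := (hfg (f l)).mpr ⟨l, rfl⟩
      simp [hK, LinearMap.mem_ker, this]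
    set f₁ : L →ₗ[R] K := f.codRestrict K hmemK with hf₁def
    have hmemR : ∀ k : K, g (K.subtype k) ∈ LinearMap.range f' := by
      intro k
      have hk : g' (g (k : M)) = 0 := k.2
      rw [LinearMap.exact_iff] at hfg'
      rw [← hfg']
      exact hk
    set g₁ : K →ₗ[R] Y :=
      (LinearEquiv.ofInjective f' hf').symm.toLinearMap.comp
        ((g.comp K.subtype).codRestrict (LinearMap.range f') hmemR) with hg₁def
    have key : ∀ k : K, f' (g₁ k) = g (k : M) := by
      intro k
      have : (LinearEquiv.ofInjective f' hf') (g₁ k) =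
          ((g.comp K.subtype).codRestrict (LinearMap.range f') hmemR) k := by
        simp [hg₁def]
      have := congrArg (Subtype.val) this
      simpa [LinearEquiv.ofInjective_apply] using this
    have hf₁ : Function.Injective f₁ := by
      intro a b hab
      exact hf (congrArg Subtype.val hab)
    have hg₁ : Function.Surjective g₁ := by
      intro y
      obtain ⟨m, hm⟩ := hg (f' y)
      have hmK : m ∈ K := by
        have : g' (f' y) = 0 := by
          rw [LinearMap.exact_iff] at hfg'
          have : f' y ∈ LinearMap.range f' := ⟨y, rfl⟩
          rw [← hfg'] at this
          exact this
        simp [hK, LinearMap.mem_ker, hm, this]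
      refine ⟨⟨m, hmK⟩, ?_⟩
      apply hf'
      rw [key ⟨m, hmK⟩]
      exact hm.trans rfl
    have hfg₁ : Function.Exact f₁ g₁ := by
      intro k
      constructor
      · intro h
        have hgk : g (k : M) = 0 := by
          rw [← key k, h, map_zero]
        obtain ⟨l, hl⟩ := (hfg (k : M)).mp hgk
        exact ⟨l, Subtype.ext hl⟩
      · rintro ⟨l, rfl⟩
        apply hf'
        rw [key]
        have : g (f l) = 0 := (hfg (f l)).mpr ⟨l, rfl⟩
        simpa [hf₁def] using this
    have hKfilt : Filt R X (p + n) K := ih p L K f₁ g₁ hf₁ hg₁ hfg₁ hL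
    have hexact2 : Function.Exact (K.subtype) (g'.comp g) := by
      rw [LinearMap.exact_iff, Submodule.range_subtype]
    have := Filt.ext hKfilt K.subtype (g'.comp g) (Subtype.val_injective)
      (hg'.comp hg) hexact2
    simpa [← add_assoc] using this

/-- Let `X` be a nonzero finitely generated module over the Noetherian local ring `R`.
If `0 → L → M → N → 0` is a short exact sequence of finitely generated `R`-modules with
`L ∈ filtᵖ X` and `N ∈ filt^q X`, then `M ∈ filtᵖ⁺q X`.  Consequently, `filt X` (the union
of the `filtⁿ X` for `n ≥ 1`) is closed under extensions. -/
theorem stmt_12 (R : Type u) [CommRing R] [IsNoetherianRing R] [IsLocalRing R]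
    (X : Type u) [AddCommGroup X] [Module R X] [Module.Finite R X] (hX : Nontrivial X) :
    (∀ (p q : ℕ) (L M N : Type u) [AddCommGroup L] [Module R L] [AddCommGroup M]
      [Module R M] [AddCommGroup N] [Module R N],
      Module.Finite R L → Module.Finite R M → Module.Finite R N →
      ∀ (f : L →ₗ[R] M) (g : M →ₗ[R] N),
        Function.Injective f → Function.Surjective g → Function.Exact f g →
        Filt R X p L → Filt R X q N → Filt R X (p + q) M) ∧
    (∀ (L M N : Type u) [AddCommGroup L] [Module R L] [AddCommGroup M] [Module R M]
      [AddCommGroup N] [Module R N],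
      Module.Finite R L → Module.Finite R M → Module.Finite R N →
      ∀ (f : L →ₗ[R] M) (g : M →ₗ[R] N),
        Function.Injective f → Function.Surjective g → Function.Exact f g →
        (∃ p, 1 ≤ p ∧ Filt R X p L) → (∃ q, 1 ≤ q ∧ Filt R X q N) →
        ∃ n, 1 ≤ n ∧ Filt R X n M) := by
  constructor
  · intro p q L M N _ _ _ _ _ _ _ _ _ f g hf hg hfg hL hN
    exact filt_aux R X hN p L M f g hf hg hfg hL
  · intro L M N _ _ _ _ _ _ _ _ _ f g hf hg hfg ⟨p, hp, hL⟩ ⟨q, hq, hN⟩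
    exact ⟨p + q, le_trans hp (Nat.le_add_right p q),
      filt_aux R X hN p L M f g hf hg hfg hL⟩
end

section
/- Let x ∈ R, n ≥ 1, and let M be a finitely generated R-module in filtⁿ(R/(x)). Then there exist elements c_{i,j} ∈ R for 1 ≤ i < j ≤ n such that, denoting by A the n×n upper-triangular matrix over R whose diagonal entries all equal x and whose (i,j)-entry for i < j is c_{i,j}, there is an exact sequence of R-modules Rⁿ → Rⁿ → M → 0 in which the first map is multiplication by A; moreover, for every 2 ≤ j ≤ n and every r ∈ (0 :_R x), the column vector (c_{1,j}r, …, c_{j−1,j}r)ᵀ lies in the image of the map R^{j−1} → R^{j−1} given by the upper-left (j−1)×(j−1) submatrix of A. -/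
universe u

/-- The `n × n` upper-triangular matrix with diagonal entries `x` and `(i,j)` entry
`c i j` for `i < j`. -/
def upperTriangularX (R : Type u) [CommRing R] (n : ℕ) (x : R)
    (c : Fin n → Fin n → R) : Matrix (Fin n) (Fin n) R :=
  Matrix.of fun i j => if (i : ℕ) = (j : ℕ) then x else if (i : ℕ) < (j : ℕ) then c i j else 0

/-- The conclusion predicate. -/
def FiltConcl (R : Type u) [CommRing R] (x : R) (n : ℕ) (M : Type u) [AddCommGroup M]
    [Module R M] : Prop :=
  ∃ c : Fin n → Fin n → R,
    (∃ π : (Fin n → R) →ₗ[R] M, Function.Surjective π ∧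
      Function.Exact (upperTriangularX R n x c).mulVecLin π) ∧
    ∀ j : Fin n, 1 ≤ (j : ℕ) → ∀ r : R, r * x = 0 →
      (fun i : Fin (j : ℕ) => c (Fin.castLE j.isLt.le i) j * r) ∈
        Set.range ((upperTriangularX R n x c).submatrix
          (Fin.castLE j.isLt.le) (Fin.castLE j.isLt.le)).mulVecLin

theorem filt_aux_s14 (R : Type u) [CommRing R] (x : R) {n : ℕ} {M : Type u} [AddCommGroup M]
    [Module R M] (hM : Filt R (R ⧸ Ideal.span {x}) n M) : FiltConcl R x n M := by
  induction hM with
  | @isom M _ _ e =>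
    refine ⟨fun _ _ => 0, ⟨e.symm.toLinearMap ∘ₗ ((Ideal.span {x}).mkQ ∘ₗ
      LinearMap.proj (0 : Fin 1)), ?_, ?_⟩, ?_⟩
    · exact e.symm.surjective.comp ((Ideal.span {x}).mkQ_surjective.comp
        (fun r => ⟨fun _ => r, rfl⟩))
    · intro w
      have h1 : (e.symm.toLinearMap ∘ₗ ((Ideal.span {x}).mkQ ∘ₗ LinearMap.proj (0 : Fin 1))) w
          = 0 ↔ (w 0 : R) ∈ Ideal.span {x} := by
        simp [LinearMap.comp_apply, LinearEquiv.map_eq_zero_iff, Submodule.Quotient.mk_eq_zero,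
          Ideal.Quotient.eq_zero_iff_mem]
      rw [h1, Ideal.mem_span_singleton']
      constructor
      · rintro ⟨a, ha⟩
        refine ⟨fun _ => a, ?_⟩
        funext i
        have hi : i = 0 := Subsingleton.elim _ _
        subst hi
        simp [Matrix.mulVecLin_apply, Matrix.mulVec, dotProduct,
          upperTriangularX, Fin.sum_univ_one]
        rw [mul_comm]
        exact ha
      · rintro ⟨u, hu⟩
        refine ⟨u 0, ?_⟩
        rw [← hu]
        simp [Matrix.mulVecLin_apply, Matrix.mulVec, dotProduct,
          upperTriangularX, Fin.sum_univ_one, mul_comm]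
    · intro j hj
      exact absurd j.isLt (by omega)
  | @ext n Y M _ _ _ _ hY f g hf hg hfg IH =>
    obtain ⟨c, ⟨π, hπ, hexact⟩, hcol⟩ := IH
    set A := upperTriangularX R n x c with hA
    -- pick m with g m = 1
    obtain ⟨m, hm⟩ := hg (Ideal.Quotient.mk (Ideal.span {x}) 1)
    -- x • m lies in range f
    have hgxm : g (x • m) = 0 := by
      rw [map_smul, hm]
      have : x • (Ideal.Quotient.mk (Ideal.span {x}) 1) =
          Ideal.Quotient.mk (Ideal.span {x}) x := by
        show x • Submodule.Quotient.mk (1 : R) = Submodule.Quotient.mk x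
        rw [← Submodule.Quotient.mk_smul, smul_eq_mul, mul_one]
      rw [this, Ideal.Quotient.eq_zero_iff_mem]
      exact Ideal.mem_span_singleton_self x
    obtain ⟨y, hy⟩ := (hfg (x • m)).mp hgxm
    obtain ⟨v, hv⟩ := hπ y
    -- the new matrix data
    set c' : Fin (n+1) → Fin (n+1) → R := fun i j =>
      if hi : (i : ℕ) < n then
        (if hj : (j : ℕ) < n then c ⟨i, hi⟩ ⟨j, hj⟩ else -(v ⟨i, hi⟩)) else 0 with hc'
    set A' := upperTriangularX R (n+1) x c' with hA'
    -- entries of A'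
    have hA'cc : ∀ (i k : Fin n), A' i.castSucc k.castSucc = A i k := by
      intro i k
      simp only [hA', hA, upperTriangularX, Matrix.of_apply, Fin.coe_castSucc, hc']
      split_ifs with h1 h2 <;> simp_all <;> rfl
    have hA'cl : ∀ (i : Fin n), A' i.castSucc (Fin.last n) = -(v i) := by
      intro i
      simp only [hA', upperTriangularX, Matrix.of_apply, Fin.coe_castSucc, Fin.val_last, hc']
      have h1 : (i : ℕ) ≠ n := Nat.ne_of_lt i.isLt
      have h2 : (i : ℕ) < n := i.isLt
      simp [h1, h2]
    have hA'lc : ∀ (k : Fin n), A' (Fin.last n) k.castSucc = 0 := by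
      intro k
      simp only [hA', upperTriangularX, Matrix.of_apply, Fin.coe_castSucc, Fin.val_last]
      have h1 : n ≠ (k : ℕ) := (Nat.ne_of_lt k.isLt).symm
      have h2 : ¬ (n < (k : ℕ)) := by omega
      simp [h1, h2]
    have hA'll : A' (Fin.last n) (Fin.last n) = x := by
      simp [hA', upperTriangularX]
    -- mulVec formula
    have hmv : ∀ u : Fin (n+1) → R,
        A'.mulVec u = Fin.snoc (A.mulVec (fun i => u i.castSucc)
          + (-(u (Fin.last n))) • v) (x * u (Fin.last n)) := by
      intro u
      funext j
      induction j using Fin.lastCases with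
      | last =>
        rw [Fin.snoc_last, Matrix.mulVec, dotProduct, Fin.sum_univ_castSucc]
        simp only [hA'lc, hA'll, zero_mul, Finset.sum_const_zero, zero_add]
      | cast i =>
        rw [Fin.snoc_castSucc, Matrix.mulVec, dotProduct, Fin.sum_univ_castSucc]
        simp only [hA'cc, hA'cl]
        simp [Matrix.mulVec, dotProduct, mul_comm]
        try ring
    -- the new surjection
    set π' : (Fin (n+1) → R) →ₗ[R] M :=
      (f ∘ₗ π) ∘ₗ LinearMap.funLeft R R Fin.castSucc
        + LinearMap.toSpanSingleton R M m ∘ₗ LinearMap.proj (Fin.last n) with hπ'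
    have hπ'apply : ∀ w : Fin (n+1) → R,
        π' w = f (π (fun i => w i.castSucc)) + w (Fin.last n) • m := fun w => rfl
    refine ⟨c', ⟨π', ?_, ?_⟩, ?_⟩
    · -- surjectivity
      intro m'
      obtain ⟨a, ha⟩ := Ideal.Quotient.mk_surjective (g m')
      have h1 : g (m' - a • m) = 0 := by
        rw [map_sub, map_smul, hm]
        have : a • (Ideal.Quotient.mk (Ideal.span {x}) 1) =
            Ideal.Quotient.mk (Ideal.span {x}) a := by
          show a • Submodule.Quotient.mk (1 : R) = Submodule.Quotient.mk a
          rw [← Submodule.Quotient.mk_smul, smul_eq_mul, mul_one]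
        rw [this, ha, sub_self]
      obtain ⟨y', hy'⟩ := (hfg _).mp h1
      obtain ⟨u', hu'⟩ := hπ y'
      refine ⟨Fin.snoc u' a, ?_⟩
      rw [hπ'apply]
      simp only [Fin.snoc_castSucc, Fin.snoc_last, hu', hy']
      abel
    · -- exactness
      intro w
      constructor
      · intro hw
        rw [hπ'apply] at hw
        have h1 : g (f (π fun i => w i.castSucc)) = 0 := hfg.apply_apply_eq_zero _
        have h2 : g (w (Fin.last n) • m) = 0 := by
          have h2' := congrArg g hw
          rw [map_add, h1, zero_add, map_zero] at h2'
          exact h2'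
        have h3 : w (Fin.last n) ∈ Ideal.span {x} := by
          rw [map_smul, hm] at h2
          have heq : w (Fin.last n) • (Ideal.Quotient.mk (Ideal.span {x}) 1) =
              Ideal.Quotient.mk (Ideal.span {x}) (w (Fin.last n)) := by
            show w (Fin.last n) • Submodule.Quotient.mk (1 : R) = Submodule.Quotient.mk _
            rw [← Submodule.Quotient.mk_smul, smul_eq_mul, mul_one]
          rw [heq] at h2
          exact (Ideal.Quotient.eq_zero_iff_mem).mp h2
        obtain ⟨s, hs⟩ := Ideal.mem_span_singleton'.mp h3
        have h4 : f (π ((fun i => w i.castSucc) + s • v)) = 0 := by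
          rw [map_add, map_add, map_smul, map_smul, hv, hy, smul_smul, hs]
          exact hw
        have h5 : π ((fun i => w i.castSucc) + s • v) = 0 := hf (by rw [h4, map_zero])
        obtain ⟨u, hu⟩ := (hexact _).mp h5
        rw [Matrix.mulVecLin_apply] at hu
        refine ⟨Fin.snoc u s, ?_⟩
        rw [Matrix.mulVecLin_apply, hmv]
        have heta : (fun i : Fin n => (Fin.snoc (α := fun _ => R) u s) i.castSucc) = u :=
          funext fun i => Fin.snoc_castSucc _ _ _
        rw [heta, Fin.snoc_last, hu, add_assoc, ← add_smul, add_neg_cancel, zero_smul,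
          add_zero, mul_comm, hs]
        funext j
        induction j using Fin.lastCases with
        | last => simp
        | cast i => simp
      · rintro ⟨u', hu'⟩
        rw [Matrix.mulVecLin_apply, hmv] at hu'
        rw [hπ'apply, ← hu']
        have heta : (fun i : Fin n => (Fin.snoc (α := fun _ => R)
            (A.mulVec (fun i => u' i.castSucc) + (-(u' (Fin.last n))) • v)
            (x * u' (Fin.last n))) i.castSucc)
            = A.mulVec (fun i => u' i.castSucc) + (-(u' (Fin.last n))) • v :=
          funext fun i => Fin.snoc_castSucc _ _ _
        rw [heta, Fin.snoc_last]
        have h0 : π (A.mulVec (fun i => u' i.castSucc)) = 0 :=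
          (hexact _).mpr ⟨fun i => u' i.castSucc, Matrix.mulVecLin_apply _ _⟩
        rw [map_add, map_smul, h0, hv, zero_add, map_smul, hy, smul_smul, ← add_smul]
        have : -u' (Fin.last n) * x + x * u' (Fin.last n) = 0 := by ring
        rw [this, zero_smul]
    · -- column condition
      intro j hj1 r hr
      by_cases hj : (j : ℕ) < n
      · set j₀ : Fin n := ⟨j, hj⟩ with hj₀
        obtain ⟨u, hu⟩ := hcol j₀ hj1 r hr
        rw [Matrix.mulVecLin_apply] at hu
        refine ⟨u, ?_⟩
        rw [Matrix.mulVecLin_apply]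
        have hmat : (A'.submatrix (Fin.castLE j.isLt.le) (Fin.castLE j.isLt.le)) =
            (A.submatrix (Fin.castLE j₀.isLt.le) (Fin.castLE j₀.isLt.le)) := by
          funext i k
          have hik : (i : ℕ) < n := by have := i.isLt; omega
          have hkk : (k : ℕ) < n := by have := k.isLt; omega
          simp only [Matrix.submatrix_apply, hA', hA, upperTriangularX, Matrix.of_apply,
            Fin.coe_castLE, hc', hik, hkk, dif_pos]
          try split_ifs <;> rfl
        rw [hmat, hu]
        funext i
        have hik : (i : ℕ) < n := by have := i.isLt; omega
        simp only [hc', Fin.coe_castLE]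
        rw [dif_pos hik, dif_pos hj]
        rfl
      · have hjn : (j : ℕ) = n := by omega
        have h1 : f (r • y) = 0 := by
          rw [map_smul, hy, smul_smul, hr, zero_smul]
        have h2 : π (r • v) = 0 := by
          rw [map_smul, hv]
          exact hf (by rw [h1, map_zero])
        obtain ⟨u, hu⟩ := (hexact (r • v)).mp h2
        rw [Matrix.mulVecLin_apply] at hu
        refine ⟨fun i => -(u ⟨i, by omega⟩), ?_⟩
        rw [Matrix.mulVecLin_apply]
        funext i
        have hik : (i : ℕ) < n := by have := i.isLt; omega
        have htarget : c' (Fin.castLE j.isLt.le i) j * r = -(r * v ⟨i, hik⟩) := by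
          simp only [hc', Fin.coe_castLE]
          rw [dif_pos hik, dif_neg hj]
          ring
        rw [htarget]
        rw [Matrix.mulVec, dotProduct]
        have hentry : ∀ k : Fin (j : ℕ),
            (A'.submatrix (Fin.castLE j.isLt.le) (Fin.castLE j.isLt.le)) i k
              = A ⟨i, hik⟩ ⟨k, by omega⟩ := by
          intro k
          have hkk : (k : ℕ) < n := by have := k.isLt; omega
          simp only [Matrix.submatrix_apply, hA', hA, upperTriangularX, Matrix.of_apply,
            Fin.coe_castLE, hc', hik, hkk, dif_pos]
          try split_ifs <;> rfl
        have hsum : ∑ k : Fin (j : ℕ),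
            (A'.submatrix (Fin.castLE j.isLt.le) (Fin.castLE j.isLt.le)) i k
              * (-(u ⟨k, by omega⟩))
            = -∑ k' : Fin n, A ⟨i, hik⟩ k' * u k' := by
          rw [← Finset.sum_neg_distrib]
          refine Fintype.sum_equiv (finCongr hjn) _ _ ?_
          intro k
          rw [hentry k]
          have hck : (finCongr hjn k : Fin n) = ⟨k, by omega⟩ := rfl
          rw [hck]
          ring
        rw [hsum]
        have h8 : ∑ k' : Fin n, A ⟨i, hik⟩ k' * u k' = r * v ⟨i, hik⟩ := by
          have := congrFun hu ⟨i, hik⟩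
          simpa [Matrix.mulVec, dotProduct] using this
        rw [h8]

/-- Let `x ∈ R`, `n ≥ 1`, and let `M` be a finitely generated module in `filtⁿ(R/(x))`.
Then there are elements `c i j` of `R` (`i < j`) such that, with `A` the upper-triangular
matrix with diagonal entries `x` and strictly-upper entries `c i j`, there is an exact
sequence `Rⁿ → Rⁿ → M → 0` whose first map is multiplication by `A`; moreover for every
column `j` (the `(j+1)`-st column in one-based indexing, `2 ≤ j + 1 ≤ n`) and every
`r ∈ (0 :_R x)`, the vector `(c 0 j * r, …, c (j-1) j * r)ᵀ` lies in the image of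
multiplication by the upper-left `j × j` submatrix of `A`. -/
theorem stmt_14 (R : Type u) [CommRing R] [IsNoetherianRing R] [IsLocalRing R]
    (x : R) (n : ℕ) (hn : 1 ≤ n) (M : Type u) [AddCommGroup M] [Module R M]
    [Module.Finite R M] (hM : Filt R (R ⧸ Ideal.span {x}) n M) :
    ∃ c : Fin n → Fin n → R,
      (∃ π : (Fin n → R) →ₗ[R] M, Function.Surjective π ∧
        Function.Exact (upperTriangularX R n x c).mulVecLin π) ∧
      ∀ j : Fin n, 1 ≤ (j : ℕ) → ∀ r : R, r * x = 0 →
        (fun i : Fin (j : ℕ) => c (Fin.castLE j.isLt.le i) j * r) ∈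
          Set.range ((upperTriangularX R n x c).submatrix
            (Fin.castLE j.isLt.le) (Fin.castLE j.isLt.le)).mulVecLin := by
  exact filt_aux_s14 R x hM
end

section
/- Let x and y be elements of R which are part of a minimal system of generators of the maximal ideal 𝔪 (equivalently, whose images in 𝔪/𝔪² are linearly independent over k) and which satisfy xy = 0. Then the residue field k does not belong to the extension closure ext(R/(x)); in particular, ext(R/(x)) is a nontrivial extension-closed subcategory of mod R. -/
universe u

open IsLocalRing

/-- Membership in the extension closure `ext X` of `X`: the smallest extension-closed
subcategory of `mod R` containing `X`. -/
def MemExtClosure (R : Type u) [CommRing R] (X : Type u) [AddCommGroup X] [Module R X]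
    (M : Type u) [AddCommGroup M] [Module R M] : Prop :=
  ∀ P : ModulePred R, IsExtClosedSubcat R P → P X → P M

/-- The extension closure `ext X`, as a subcategory of `mod R`. -/
def ExtClosure (R : Type u) [CommRing R] (X : Type u) [AddCommGroup X] [Module R X] :
    ModulePred R :=
  fun M [AddCommGroup M] [Module R M] => MemExtClosure R X M


namespace ExtAux

variable {R : Type u} [CommRing R]

def Filt (x : R) : ℕ → ∀ (M : Type u) [AddCommGroup M] [Module R M], Prop
  | 0, M, _, _ => Subsingleton M
  | n+1, M, _, _ => ∃ g : M →ₗ[R] (R ⧸ Ideal.span {x}), Function.Surjective g ∧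
      Filt x n (LinearMap.ker g)

section LocalHelpers
variable [IsLocalRing R] {x y : R}

lemma one_not_mem_max : (1:R) ∉ maximalIdeal R := by
  intro h
  exact (Ideal.IsMaximal.ne_top (IsLocalRing.maximalIdeal.isMaximal R))
    (Ideal.eq_top_of_isUnit_mem _ h isUnit_one)

lemma coeff_mem_max
    (hmin : ∀ a b : R, a * x + b * y ∈ (maximalIdeal R) ^ 2 →
      a ∈ maximalIdeal R ∧ b ∈ maximalIdeal R)
    {q : R} (h : q * x ∈ (maximalIdeal R) ^ 2) : q ∈ maximalIdeal R := by
  have := hmin q 0 (by simpa using h)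
  exact this.1

lemma factor_mem_max
    (hmin : ∀ a b : R, a * x + b * y ∈ (maximalIdeal R) ^ 2 →
      a ∈ maximalIdeal R ∧ b ∈ maximalIdeal R)
    {r m₂ b : R} (hm2 : m₂ ∈ (maximalIdeal R) ^ 2) (heq : y * r = m₂ + b * x) :
    r ∈ maximalIdeal R := by
  by_contra hr
  have hu : IsUnit r := by
    by_contra hu
    exact hr ((IsLocalRing.mem_maximalIdeal r).2 hu)
  obtain ⟨v, hv⟩ := hu.exists_right_inv
  have h1 : y = m₂ * v + (b * v) * x := by
    calc y = y * (r * v) := by rw [hv, mul_one]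
    _ = y * r * v := by ring
    _ = m₂ * v + (b * v) * x := by rw [heq]; ring
  have h2 : (-(b*v)) * x + 1 * y ∈ (maximalIdeal R) ^ 2 := by
    have h3 : (-(b*v)) * x + 1 * y = m₂ * v := by rw [one_mul, h1]; ring
    rw [h3]
    exact Ideal.mul_mem_right _ _ hm2
  exact one_not_mem_max ((hmin _ _ h2).2)

lemma residue_smul_zero {a : R} (ha : a ∈ maximalIdeal R) (z : ResidueField R) :
    a • z = 0 := by
  obtain ⟨t, rfl⟩ := Ideal.Quotient.mk_surjective z
  have h : a • (Ideal.Quotient.mk (maximalIdeal R) t) = Ideal.Quotient.mk _ (a * t) := rfl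
  exact (h.trans (Ideal.Quotient.eq_zero_iff_mem.mpr (Ideal.mul_mem_right _ _ ha)) :)

/-- The key induction: in a module filtered by copies of `R⧸(x)`, any element `w` whose
`𝔪`-multiples lie in the `𝔪`-span of a "triangular" list `τ` is killed by every linear
functional to the residue field. -/
lemma key_lemma
    (hy : y ∈ maximalIdeal R)
    (hmin : ∀ a b : R, a * x + b * y ∈ (maximalIdeal R) ^ 2 →
      a ∈ maximalIdeal R ∧ b ∈ maximalIdeal R)
    (hxy : x * y = 0) :
    ∀ (n : ℕ) (V : Type u) [AddCommGroup V] [Module R V], Filt x n V →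
    ∀ (p : ℕ) (τ : Fin p → V),
    (∀ l : Fin p, ∃ c : Fin p → R, (∀ j, c j ∈ maximalIdeal R) ∧ (∀ j, j ≤ l → c j = 0) ∧
      y • τ l = ∑ j, c j • τ j) →
    ∀ w : V, (∀ a ∈ maximalIdeal R, ∃ c : Fin p → R, (∀ j, c j ∈ maximalIdeal R) ∧
      a • w = ∑ j, c j • τ j) →
    ∀ φ : V →ₗ[R] ResidueField R, φ w = 0 := by
  intro n
  induction n with
  | zero =>
    intro V _ _ hV p τ _ w _ φ
    haveI : Subsingleton V := hV
    have hw0 : w = (0:V) := Subsingleton.elim _ _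
    rw [hw0, map_zero]
  | succ n ih =>
    intro V _ _ hV p τ htri w hw φ
    obtain ⟨g, hgsurj, hker⟩ := hV
    set mk : R →+* R ⧸ Ideal.span {x} := Ideal.Quotient.mk (Ideal.span {x}) with hmk
    -- smul on the quotient
    have hsmulmk : ∀ (a t : R), a • (mk t) = mk (a * t) := fun a t => rfl
    -- lifts of τ
    have hexs : ∀ l : Fin p, ∃ s : R, mk s = g (τ l) := fun l => Ideal.Quotient.mk_surjective _
    choose s hs using hexs
    -- triangular data
    choose c hcm hcz hceq using htri
    -- the x-coefficients b l
    have hexb : ∀ l : Fin p, ∃ b : R, y * s l - (∑ j, c l j * s j) = b * x := by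
      intro l
      have h1 : mk (y * s l) = mk (∑ j, c l j * s j) := by
        have h2 := congrArg g (hceq l)
        rw [map_smul, map_sum] at h2
        simp only [map_smul] at h2
        rw [← hs l] at h2
        have h3 : (∑ j, c l j • g (τ j)) = mk (∑ j, c l j * s j) := by
          rw [map_sum]
          exact Finset.sum_congr rfl (fun j _ => by rw [← hs j, hsmulmk])
        rw [h3] at h2
        rw [← h2, hsmulmk]
      have h4 : y * s l - (∑ j, c l j * s j) ∈ Ideal.span {x} :=
        (Ideal.Quotient.mk_eq_mk_iff_sub_mem _ _).mp h1
      obtain ⟨b, hb⟩ := Ideal.mem_span_singleton'.mp h4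
      exact ⟨b, hb.symm⟩
    choose b hb using hexb
    -- all s l ∈ 𝔪, by downward induction
    have hsm : ∀ l : Fin p, s l ∈ maximalIdeal R := by
      have main : ∀ m : ℕ, ∀ l : Fin p, p - l.1 ≤ m → s l ∈ maximalIdeal R := by
        intro m
        induction m with
        | zero =>
          intro l hl
          exact absurd hl (by have := l.2; omega)
        | succ m ihm =>
          intro l _
          have hsum : (∑ j, c l j * s j) ∈ (maximalIdeal R) ^ 2 := by
            apply Ideal.sum_mem
            intro j _
            by_cases hj : j ≤ l
            · rw [hcz l j hj, zero_mul]; exact zero_mem _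
            · have hlj : l < j := lt_of_not_ge hj
              have hjm : s j ∈ maximalIdeal R := by
                apply ihm
                have h1 : l.1 < j.1 := hlj
                have := j.2
                omega
              rw [pow_two]
              exact Ideal.mul_mem_mul (hcm l j) hjm
          have heq : y * s l = (∑ j, c l j * s j) + b l * x := by
            have h := hb l
            linear_combination h
          exact factor_mem_max hmin hsum heq
      intro l
      exact main p l (by omega)
    have hbm : ∀ l : Fin p, b l ∈ maximalIdeal R := by
      intro l
      apply coeff_mem_max hmin (q := b l)
      rw [← hb l]
      refine Ideal.sub_mem _ ?_ ?_
      · rw [pow_two]; exact Ideal.mul_mem_mul hy (hsm l)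
      · apply Ideal.sum_mem
        intro j _
        rw [pow_two]; exact Ideal.mul_mem_mul (hcm l j) (hsm j)
    -- lift of g w
    obtain ⟨r', hr'⟩ := Ideal.Quotient.mk_surjective (g w)
    have getq : ∀ (a : R) (ca : Fin p → R), a • w = (∑ j, ca j • τ j) →
        ∃ q : R, a * r' - (∑ j, ca j * s j) = q * x := by
      intro a ca hca
      have h1 : mk (a * r') = mk (∑ j, ca j * s j) := by
        have h2 := congrArg g hca
        rw [map_smul, map_sum] at h2
        simp only [map_smul] at h2
        rw [← hr'] at h2
        have h3 : (∑ j, ca j • g (τ j)) = mk (∑ j, ca j * s j) := by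
          rw [map_sum]
          exact Finset.sum_congr rfl (fun j _ => by rw [← hs j, hsmulmk])
        rw [h3] at h2
        rw [← h2, hsmulmk]
      have h4 : a * r' - (∑ j, ca j * s j) ∈ Ideal.span {x} :=
        (Ideal.Quotient.mk_eq_mk_iff_sub_mem _ _).mp h1
      obtain ⟨q, hq⟩ := Ideal.mem_span_singleton'.mp h4
      exact ⟨q, hq.symm⟩
    -- r' ∈ 𝔪
    obtain ⟨cy, hcym, hcyeq⟩ := hw y hy
    obtain ⟨qy, hqy⟩ := getq y cy hcyeq
    have hr'm : r' ∈ maximalIdeal R := by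
      apply factor_mem_max hmin (m₂ := ∑ j, cy j * s j) (b := qy)
      · apply Ideal.sum_mem
        intro j _
        rw [pow_two]; exact Ideal.mul_mem_mul (hcym j) (hsm j)
      · linear_combination hqy
    -- generator lift
    obtain ⟨G, hG⟩ := hgsurj (mk 1)
    have hw'ker : w - r' • G ∈ LinearMap.ker g := by
      rw [LinearMap.mem_ker, map_sub, map_smul, hG, ← hr', hsmulmk, mul_one, sub_self]
    have hσker : x • G ∈ LinearMap.ker g := by
      rw [LinearMap.mem_ker, map_smul, hG, hsmulmk, mul_one]
      exact Ideal.Quotient.eq_zero_iff_mem.mpr (Ideal.mem_span_singleton_self x)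
    have hτ'ker : ∀ l : Fin p, τ l - s l • G ∈ LinearMap.ker g := by
      intro l
      rw [LinearMap.mem_ker, map_sub, map_smul, hG, hsmulmk, mul_one, ← hs l, sub_self]
    set K : Submodule R V := LinearMap.ker g with hK
    set τ'' : Fin (p+1) → ↥K :=
      Fin.snoc (fun l => ⟨τ l - s l • G, hτ'ker l⟩) ⟨x • G, hσker⟩ with hτ''
    -- coercion of sums over the new list
    have hcoesum : ∀ (c' : Fin (p+1) → R),
        ((↑(∑ j, c' j • τ'' j) : V)) =
          (∑ j : Fin p, c' j.castSucc • (τ j - s j • G)) + c' (Fin.last p) • (x • G) := by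
      intro c'
      rw [Submodule.coe_sum]
      rw [Fin.sum_univ_castSucc]
      congr 1
      · exact Finset.sum_congr rfl (fun j _ => by
          rw [Submodule.coe_smul, hτ'', Fin.snoc_castSucc])
      · rw [Submodule.coe_smul, hτ'', Fin.snoc_last]
    have hsumsub : ∀ (cc : Fin p → R),
        (∑ j : Fin p, cc j • (τ j - s j • G)) =
          (∑ j, cc j • τ j) - (∑ j, cc j * s j) • G := by
      intro cc
      rw [Finset.sum_smul, ← Finset.sum_sub_distrib]
      exact Finset.sum_congr rfl (fun j _ => by rw [smul_sub, smul_smul])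
    -- triangularity for the new list
    have htri'' : ∀ l : Fin (p+1), ∃ c' : Fin (p+1) → R,
        (∀ j, c' j ∈ maximalIdeal R) ∧ (∀ j, j ≤ l → c' j = 0) ∧
        y • τ'' l = ∑ j, c' j • τ'' j := by
      intro l
      obtain ⟨l₀, rfl⟩ | rfl := l.eq_castSucc_or_eq_last
      · refine ⟨Fin.snoc (c l₀) (-(b l₀)), ?_, ?_, ?_⟩
        · intro j
          obtain ⟨j₀, rfl⟩ | rfl := j.eq_castSucc_or_eq_last
          · rw [Fin.snoc_castSucc]; exact hcm l₀ j₀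
          · rw [Fin.snoc_last]; exact neg_mem (hbm l₀)
        · intro j hj
          obtain ⟨j₀, rfl⟩ | rfl := j.eq_castSucc_or_eq_last
          · rw [Fin.snoc_castSucc]
            exact hcz l₀ j₀ (Fin.castSucc_le_castSucc_iff.mp hj)
          · exfalso
            have h1 : (Fin.last p : Fin (p+1)).1 ≤ (l₀.castSucc).1 := hj
            have h2 : (l₀ : ℕ) < p := l₀.2
            simp [Fin.last] at h1
            omega
        · apply Subtype.ext
          rw [Submodule.coe_smul, hcoesum]
          simp only [Fin.snoc_castSucc, Fin.snoc_last]
          have hcoeτ : ((τ'' l₀.castSucc : ↥K) : V) = τ l₀ - s l₀ • G := by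
            rw [hτ'', Fin.snoc_castSucc]
          rw [hcoeτ, hsumsub]
          have key1 : y * s l₀ = (∑ j, c l₀ j * s j) + b l₀ * x := by
            linear_combination hb l₀
          rw [smul_sub, hceq l₀, smul_smul, key1, add_smul, smul_smul, neg_mul, neg_smul]
          abel
      · refine ⟨fun _ => 0, fun j => zero_mem _, fun j _ => rfl, ?_⟩
        apply Subtype.ext
        rw [Submodule.coe_smul, hcoesum]
        have hcoeσ : ((τ'' (Fin.last p) : ↥K) : V) = x • G := by
          rw [hτ'', Fin.snoc_last]
        rw [hcoeσ, smul_smul, mul_comm, hxy, zero_smul]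
        simp
    -- the hypothesis for w' over the new list
    have hw'' : ∀ a ∈ maximalIdeal R, ∃ c' : Fin (p+1) → R,
        (∀ j, c' j ∈ maximalIdeal R) ∧
        a • (⟨w - r' • G, hw'ker⟩ : ↥K) = ∑ j, c' j • τ'' j := by
      intro a ha
      obtain ⟨ca, hcam, hcaeq⟩ := hw a ha
      obtain ⟨qa, hqa⟩ := getq a ca hcaeq
      have hqam : qa ∈ maximalIdeal R := by
        apply coeff_mem_max hmin (q := qa)
        rw [← hqa]
        refine Ideal.sub_mem _ ?_ ?_
        · rw [pow_two]; exact Ideal.mul_mem_mul ha hr'm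
        · apply Ideal.sum_mem
          intro j _
          rw [pow_two]; exact Ideal.mul_mem_mul (hcam j) (hsm j)
      refine ⟨Fin.snoc ca (-qa), ?_, ?_⟩
      · intro j
        obtain ⟨j₀, rfl⟩ | rfl := j.eq_castSucc_or_eq_last
        · rw [Fin.snoc_castSucc]; exact hcam j₀
        · rw [Fin.snoc_last]; exact neg_mem hqam
      · apply Subtype.ext
        rw [Submodule.coe_smul, hcoesum]
        simp only [Fin.snoc_castSucc, Fin.snoc_last]
        rw [hsumsub]
        show a • (w - r' • G) = _
        have key2 : a * r' = (∑ j, ca j * s j) + qa * x := by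
          linear_combination hqa
        rw [smul_sub, hcaeq, smul_smul, key2, add_smul, smul_smul, neg_mul, neg_smul]
        abel
    -- apply the induction hypothesis
    have hres : (φ.comp K.subtype) (⟨w - r' • G, hw'ker⟩ : ↥K) = 0 :=
      ih (↥K) hker (p+1) τ'' htri'' ⟨w - r' • G, hw'ker⟩ hw'' (φ.comp K.subtype)
    have hφw' : φ (w - r' • G) = 0 := hres
    have hfin : φ w = φ (w - r' • G) + r' • φ G := by
      rw [map_sub, map_smul]; abel
    rw [hfin, hφw', residue_smul_zero hr'm, add_zero]


end LocalHelpers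

lemma filt_congr {x : R} : ∀ (n : ℕ) (M N : Type u) [AddCommGroup M] [Module R M]
    [AddCommGroup N] [Module R N], Filt x n M → (M ≃ₗ[R] N) → Filt x n N := by
  intro n
  induction n with
  | zero =>
    intro M N _ _ _ _ hM e
    haveI : Subsingleton M := hM
    exact e.symm.toEquiv.subsingleton
  | succ n ih =>
    intro M N _ _ _ _ hM e
    obtain ⟨g, hgs, hker⟩ := hM
    refine ⟨g.comp e.symm.toLinearMap, hgs.comp e.symm.surjective, ?_⟩
    have hmap : Submodule.map (e : M →ₗ[R] N) (LinearMap.ker g) =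
        LinearMap.ker (g.comp e.symm.toLinearMap) := by
      ext z
      simp only [Submodule.mem_map, LinearMap.mem_ker, LinearMap.coe_comp,
        Function.comp_apply, LinearEquiv.coe_coe]
      constructor
      · rintro ⟨m, hm, rfl⟩
        rw [e.symm_apply_apply]; exact hm
      · intro hz
        exact ⟨e.symm z, hz, e.apply_symm_apply z⟩
    exact ih _ _ hker ((e.submoduleMap (LinearMap.ker g)).trans
      (LinearEquiv.ofEq _ _ hmap))

lemma filt_ext {x : R} : ∀ (bn : ℕ) (A E B : Type u) [AddCommGroup A] [Module R A]
    [AddCommGroup E] [Module R E] [AddCommGroup B] [Module R B]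
    (f : A →ₗ[R] E) (g : E →ₗ[R] B),
    Function.Injective f → Function.Surjective g → Function.Exact f g →
    (∃ a, Filt x a A) → Filt x bn B → ∃ m, Filt x m E := by
  intro bn
  induction bn with
  | zero =>
    intro A E B _ _ _ _ _ _ f g hf hg hex hA hB
    haveI : Subsingleton B := hB
    obtain ⟨a, hA⟩ := hA
    refine ⟨a, ?_⟩
    have hbij : Function.Bijective f :=
      ⟨hf, fun v => (hex v).mp (Subsingleton.elim _ _)⟩
    exact filt_congr a A E hA (LinearEquiv.ofBijective f hbij)
  | succ bn ih =>
    intro A E B _ _ _ _ _ _ f g hf hg hex hA hB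
    obtain ⟨gB, hgBs, hkerB⟩ := hB
    have hg's : Function.Surjective (gB.comp g) := hgBs.comp hg
    have hfmem : ∀ a, f a ∈ LinearMap.ker (gB.comp g) := by
      intro a
      rw [LinearMap.mem_ker, LinearMap.comp_apply, hex.apply_apply_eq_zero a, map_zero]
    have hmap : ∀ v : ↥(LinearMap.ker (gB.comp g)),
        (g.comp (LinearMap.ker (gB.comp g)).subtype) v ∈ LinearMap.ker gB := by
      intro v
      rw [LinearMap.mem_ker]
      exact v.2
    obtain ⟨m, hm⟩ := ih A (↥(LinearMap.ker (gB.comp g))) (↥(LinearMap.ker gB))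
      (LinearMap.codRestrict _ f hfmem)
      (LinearMap.codRestrict _ (g.comp (LinearMap.ker (gB.comp g)).subtype) hmap)
      (fun a b hab => hf (congrArg Subtype.val hab))
      (by
        rintro ⟨bv, hbv⟩
        obtain ⟨ev, hev⟩ := hg bv
        have hevk : ev ∈ LinearMap.ker (gB.comp g) := by
          rw [LinearMap.mem_ker, LinearMap.comp_apply, hev]
          exact hbv
        exact ⟨⟨ev, hevk⟩, Subtype.ext hev⟩)
      (by
        intro v
        constructor
        · intro hv0
          have h1 : g v.1 = 0 := congrArg Subtype.val hv0
          obtain ⟨a, ha⟩ := (hex v.1).mp h1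
          exact ⟨a, Subtype.ext ha⟩
        · rintro ⟨a, rfl⟩
          apply Subtype.ext
          exact hex.apply_apply_eq_zero a)
      hA hkerB
    exact ⟨m+1, ⟨gB.comp g, hg's, hm⟩⟩

lemma finite_ext {A E B : Type u} [AddCommGroup A] [Module R A] [AddCommGroup E]
    [Module R E] [AddCommGroup B] [Module R B]
    (f : A →ₗ[R] E) (g : E →ₗ[R] B) (hf : Function.Injective f)
    (hg : Function.Surjective g) (hex : Function.Exact f g)
    (hA : Module.Finite R A) (hB : Module.Finite R B) : Module.Finite R E := by
  rw [Module.finite_def]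
  apply Submodule.fg_of_fg_map_of_fg_inf_ker g
  · rw [Submodule.map_top, LinearMap.range_eq_top.mpr hg]
    exact Module.finite_def.mp hB
  · rw [top_inf_eq]
    rw [LinearMap.exact_iff.mp hex, ← Submodule.map_top]
    exact (Module.finite_def.mp hA).map f


/-- The separating predicate: finitely generated retracts of modules filtered by `R⧸(x)`. -/
def GoodPred (x : R) : ModulePred R := fun M _ _ =>
  Module.Finite R M ∧ ∃ (n : ℕ) (V : Type u) (_ : AddCommGroup V) (_ : Module R V)
    (ι : M →ₗ[R] V) (π : V →ₗ[R] M), π ∘ₗ ι = LinearMap.id ∧ Filt x n V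

section Closure
variable {x : R}

lemma good_iso {M N : Type u} [AddCommGroup M] [Module R M] [AddCommGroup N] [Module R N]
    (e : M ≃ₗ[R] N) (hM : GoodPred x M) : GoodPred x N := by
  obtain ⟨hfin, n, V, iV, jV, ι, π, hret, hfilt⟩ := hM
  refine ⟨Module.Finite.equiv e, n, V, iV, jV,
    ι.comp e.symm.toLinearMap, (e : M →ₗ[R] N).comp π, ?_, hfilt⟩
  ext v
  simp only [LinearMap.comp_apply, LinearEquiv.coe_coe, LinearMap.id_apply]
  have h1 : π (ι (e.symm v)) = e.symm v := by
    have := congrArg (fun (F : M →ₗ[R] M) => F (e.symm v)) hret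
    simpa using this
  rw [h1, e.apply_symm_apply]

lemma good_retract {M N : Type u} [AddCommGroup M] [Module R M] [AddCommGroup N]
    [Module R N] (hM : GoodPred x M)
    (h : ∃ (ι : N →ₗ[R] M) (π : M →ₗ[R] N), π ∘ₗ ι = LinearMap.id) : GoodPred x N := by
  obtain ⟨hfin, n, V, iV, jV, ιM, πM, hretM, hfilt⟩ := hM
  obtain ⟨ι, π, hret⟩ := h
  have hπs : Function.Surjective π := by
    intro nn
    exact ⟨ι nn, by
      have := congrArg (fun (F : N →ₗ[R] N) => F nn) hret
      simpa using this⟩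
  refine ⟨Module.Finite.of_surjective (hM := hfin) π hπs, n, V, iV, jV,
    ιM.comp ι, π.comp πM, ?_, hfilt⟩
  ext nn
  simp only [LinearMap.comp_apply, LinearMap.id_apply]
  have h1 : πM (ιM (ι nn)) = ι nn := by
    have := congrArg (fun (F : M →ₗ[R] M) => F (ι nn)) hretM
    simpa using this
  rw [h1]
  have := congrArg (fun (F : N →ₗ[R] N) => F nn) hret
  simpa using this



end Closure

section Closure2
variable {x : R}

/-- Extensions preserve `GoodPred`. -/
lemma good_extension {L M N : Type u} [AddCommGroup L] [Module R L] [AddCommGroup M]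
    [Module R M] [AddCommGroup N] [Module R N] (f : L →ₗ[R] M) (g : M →ₗ[R] N)
    (hf : Function.Injective f) (hg : Function.Surjective g) (hex : Function.Exact f g)
    (hL : GoodPred x L) (hN : GoodPred x N) : GoodPred x M := by
  obtain ⟨hfinL, nL, VL, iVL, jVL, ιL, πL, hretL, hfiltL⟩ := hL
  obtain ⟨hfinN, nN, VN, iVN, jVN, ιN, πN, hretN, hfiltN⟩ := hN
  have hretLapp : ∀ v, πL (ιL v) = v := by
    intro v
    have := congrArg (fun (F : L →ₗ[R] L) => F v) hretL
    simpa using this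
  have hretNapp : ∀ v, πN (ιN v) = v := by
    intro v
    have := congrArg (fun (F : N →ₗ[R] N) => F v) hretN
    simpa using this
  -- the big module
  set KL : Submodule R VL := LinearMap.ker πL with hKL
  set KN : Submodule R VN := LinearMap.ker πN with hKN
  -- E := KL × (M × KN)
  have hmemKL : ∀ v : VL, v - ιL (πL v) ∈ KL := by
    intro v
    rw [hKL, LinearMap.mem_ker, map_sub, hretLapp, sub_self]
  set F : VL →ₗ[R] (↥KL × (M × ↥KN)) :=
    (LinearMap.codRestrict KL (LinearMap.id - ιL.comp πL) (fun v => hmemKL v)).prod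
      ((f.comp πL).prod 0) with hF
  set G : (↥KL × (M × ↥KN)) →ₗ[R] VN :=
    ((ιN.comp g).comp ((LinearMap.fst R M ↥KN).comp (LinearMap.snd R ↥KL (M × ↥KN)))) +
      (KN.subtype.comp ((LinearMap.snd R M ↥KN).comp (LinearMap.snd R ↥KL (M × ↥KN)))) with hG
  have hFapp : ∀ v, F v = (⟨v - ιL (πL v), hmemKL v⟩, (f (πL v), 0)) := by
    intro v; rfl
  have hGapp : ∀ (u : ↥KL) (m : M) (u' : ↥KN), G (u, (m, u')) = ιN (g m) + u'.1 := by
    intro u m u'; rfl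
  have hFinj : Function.Injective F := by
    intro v v' hvv'
    have h1 : f (πL v) = f (πL v') := congrArg (fun z => z.2.1) hvv'
    have h2 : πL v = πL v' := hf h1
    have h3 : v - ιL (πL v) = v' - ιL (πL v') := congrArg (fun z => (z.1 : VL)) hvv'
    rw [h2] at h3
    exact sub_left_inj.mp h3
  have hGsurj : Function.Surjective G := by
    intro vN
    have hmem : vN - ιN (πN vN) ∈ KN := by
      rw [hKN, LinearMap.mem_ker, map_sub, hretNapp, sub_self]
    obtain ⟨m, hm⟩ := hg (πN vN)
    refine ⟨(0, (m, ⟨vN - ιN (πN vN), hmem⟩)), ?_⟩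
    rw [hGapp, hm]
    show ιN (πN vN) + (vN - ιN (πN vN)) = vN
    abel
  have hexFG : Function.Exact F G := by
    rintro ⟨u, m, u'⟩
    constructor
    · intro hz0
      rw [hGapp] at hz0
      have hgm : g m = 0 := by
        have h4 := congrArg πN hz0
        rw [map_add, hretNapp, map_zero] at h4
        have hu' : πN u'.1 = 0 := u'.2
        rw [hu', add_zero] at h4
        exact h4
      obtain ⟨a, ha⟩ := (hex m).mp hgm
      have hu'0 : u'.1 = 0 := by
        have h5 : ιN (g m) = 0 := by rw [hgm, map_zero]
        rw [h5, zero_add] at hz0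
        exact hz0
      refine ⟨ιL a + u.1, ?_⟩
      rw [hFapp]
      have hπ : πL (ιL a + u.1) = a := by
        have h6 : πL u.1 = 0 := u.2
        rw [map_add, hretLapp, h6, add_zero]
      rw [Prod.ext_iff]
      constructor
      · apply Subtype.ext
        show (ιL a + u.1) - ιL (πL (ιL a + u.1)) = u.1
        rw [hπ]; abel
      rw [Prod.ext_iff]
      constructor
      · show f (πL (ιL a + u.1)) = m
        rw [hπ, ha]
      · apply Subtype.ext
        exact hu'0.symm
    · intro hzr
      obtain ⟨v, hv⟩ := hzr
      rw [← hv, hFapp, hGapp]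
      have h7 : g (f (πL v)) = 0 := hex.apply_apply_eq_zero (πL v)
      rw [h7, map_zero, zero_add]
      rfl
  obtain ⟨mE, hEfilt⟩ :=
    filt_ext nN VL (↥KL × (M × ↥KN)) VN F G hFinj hGsurj hexFG ⟨nL, hfiltL⟩ hfiltN
  refine ⟨finite_ext f g hf hg hex hfinL hfinN, mE, (↥KL × (M × ↥KN)), inferInstance,
    inferInstance, (0 : M →ₗ[R] ↥KL).prod (LinearMap.id.prod 0),
    (LinearMap.fst R M ↥KN).comp (LinearMap.snd R ↥KL (M × ↥KN)), ?_, hEfilt⟩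
  ext m
  rfl


end Closure2


section Final
variable [IsLocalRing R] {x y : R}

lemma smul_mk_quot (x a t : R) :
    a • (Ideal.Quotient.mk (Ideal.span {x}) t) = Ideal.Quotient.mk (Ideal.span {x}) (a*t) := rfl

lemma finD : Module.Finite R (R ⧸ Ideal.span {x}) :=
  Module.Finite.of_surjective (Submodule.mkQ (Ideal.span {x})) (Submodule.mkQ_surjective _)

lemma good_D : GoodPred x (R ⧸ Ideal.span {x}) := by
  refine ⟨finD, 1, R ⧸ Ideal.span {x}, inferInstance, inferInstance,
    LinearMap.id, LinearMap.id, rfl, ?_⟩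
  refine ⟨LinearMap.id, Function.surjective_id, ?_⟩
  show Subsingleton ↥(LinearMap.ker (LinearMap.id : (R ⧸ Ideal.span {x}) →ₗ[R] _))
  rw [LinearMap.ker_id]
  infer_instance

lemma good_not_k
    (hy : y ∈ maximalIdeal R)
    (hmin : ∀ a b : R, a * x + b * y ∈ (maximalIdeal R) ^ 2 →
      a ∈ maximalIdeal R ∧ b ∈ maximalIdeal R)
    (hxy : x * y = 0) : ¬ GoodPred x (ResidueField R) := by
  rintro ⟨hfin, n, V, iV, jV, ι, π, hret, hfilt⟩
  have hw : ∀ a ∈ maximalIdeal R, ∃ c : Fin 0 → R, (∀ j, c j ∈ maximalIdeal R) ∧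
      a • (ι 1) = ∑ j, c j • (fun _ : Fin 0 => (0:V)) j := by
    intro a ha
    refine ⟨fun j => 0, fun j => j.elim0, ?_⟩
    rw [← map_smul, residue_smul_zero ha, map_zero]
    simp
  have hkey := key_lemma hy hmin hxy n V hfilt 0 (fun _ => (0:V))
    (fun l => l.elim0) (ι 1) hw π
  have h1 : π (ι 1) = 1 := by
    have := congrArg (fun (F : ResidueField R →ₗ[R] ResidueField R) =>
      F (1 : ResidueField R)) hret
    simpa using this
  rw [h1] at hkey
  exact one_ne_zero hkey

end Final

end ExtAux


/-- Let `x, y` be part of a minimal system of generators of the maximal ideal `𝔪` of the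
Noetherian local ring `R` (that is, the images of `x` and `y` in `𝔪/𝔪²` are linearly
independent over the residue field `k`) with `x * y = 0`.  Then the residue field `k` does
not belong to the extension closure `ext (R/(x))`; hence `ext (R/(x))` is a nontrivial
extension-closed subcategory of `mod R`. -/
theorem stmt_15 (R : Type u) [CommRing R] [IsNoetherianRing R] [IsLocalRing R]
    (x y : R) (hx : x ∈ maximalIdeal R) (hy : y ∈ maximalIdeal R)
    (hmin : ∀ a b : R, a * x + b * y ∈ (maximalIdeal R) ^ 2 →
      a ∈ maximalIdeal R ∧ b ∈ maximalIdeal R)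
    (hxy : x * y = 0) :
    ¬ MemExtClosure R (R ⧸ Ideal.span {x}) (ResidueField R) ∧
    IsExtClosedSubcat R (ExtClosure R (R ⧸ Ideal.span {x})) ∧
    ¬ IsZeroSubcat R (ExtClosure R (R ⧸ Ideal.span {x})) ∧
    ¬ IsAddRSubcat R (ExtClosure R (R ⧸ Ideal.span {x})) ∧
    ¬ IsModRSubcat R (ExtClosure R (R ⧸ Ideal.span {x})) := by
  classical
  -- the separating extension-closed subcategory
  have hgood : IsExtClosedSubcat R (ExtAux.GoodPred x) := by
    refine ⟨?_, ?_, ?_, ?_, ?_⟩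
    · intro M _ _ h; exact h.1
    · intro M N _ _ _ _ ⟨e⟩ hM; exact ExtAux.good_iso e hM
    · exact ⟨R ⧸ Ideal.span {x}, inferInstance, inferInstance, ExtAux.good_D⟩
    · intro M N _ _ _ _ hM h; exact ExtAux.good_retract hM h
    · intro L M N _ _ _ _ _ _ f g hf hg hex hL hN
      exact ExtAux.good_extension f g hf hg hex hL hN
  have part1 : ¬ MemExtClosure R (R ⧸ Ideal.span {x}) (ResidueField R) := by
    intro hmem
    exact ExtAux.good_not_k hy hmin hxy (hmem (ExtAux.GoodPred x) hgood ExtAux.good_D)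
  -- the predicate "finitely generated" is extension-closed
  have hfinpred : IsExtClosedSubcat R (fun (M : Type u) _ _ => Module.Finite R M) := by
    refine ⟨?_, ?_, ?_, ?_, ?_⟩
    · intro M _ _ h; exact h
    · intro M N _ _ _ _ ⟨e⟩ hM
      haveI := hM
      exact Module.Finite.equiv e
    · exact ⟨R, inferInstance, inferInstance, inferInstance⟩
    · intro M N _ _ _ _ hM ⟨ι, π, hret⟩
      have hπs : Function.Surjective π := by
        intro nn
        refine ⟨ι nn, ?_⟩
        have := congrArg (fun (F : N →ₗ[R] N) => F nn) hret
        simpa using this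
      exact Module.Finite.of_surjective (hM := hM) π hπs
    · intro L M N _ _ _ _ _ _ f g hf hg hex hL hN
      exact ExtAux.finite_ext f g hf hg hex hL hN
  have hDmem : ExtClosure R (R ⧸ Ideal.span {x}) (R ⧸ Ideal.span {x}) :=
    fun P _ hX => hX
  have hfinD : Module.Finite R (R ⧸ Ideal.span {x}) := ExtAux.finD
  have part2 : IsExtClosedSubcat R (ExtClosure R (R ⧸ Ideal.span {x})) := by
    refine ⟨?_, ?_, ?_, ?_, ?_⟩
    · intro M iM jM hM
      exact hM (fun (M : Type u) _ _ => Module.Finite R M) hfinpred hfinD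
    · intro M N _ _ _ _ e hM P hP hX
      exact hP.2.1 M N e (hM P hP hX)
    · exact ⟨R ⧸ Ideal.span {x}, inferInstance, inferInstance, hDmem⟩
    · intro M N _ _ _ _ hM hret P hP hX
      exact hP.2.2.2.1 M N (hM P hP hX) hret
    · intro L M N _ _ _ _ _ _ f g hf hg hex hL hN P hP hX
      exact hP.2.2.2.2 L M N f g hf hg hex (hL P hP hX) (hN P hP hX)
  have hone : (1:R) ∉ Ideal.span {x} := by
    intro h1
    exact ExtAux.one_not_mem_max ((Ideal.span_singleton_le_iff_mem _).mpr hx h1)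
  have hDone : (1 : R ⧸ Ideal.span {x}) ≠ 0 := by
    intro h1
    apply hone
    rw [← Ideal.Quotient.eq_zero_iff_mem]
    exact h1
  have part3 : ¬ IsZeroSubcat R (ExtClosure R (R ⧸ Ideal.span {x})) := by
    intro h
    haveI hss : Subsingleton (R ⧸ Ideal.span {x}) :=
      (h (R ⧸ Ideal.span {x}) hfinD).mp hDmem
    exact hDone (Subsingleton.elim _ _)
  have part4 : ¬ IsAddRSubcat R (ExtClosure R (R ⧸ Ideal.span {x})) := by
    intro h
    have hfree : Module.Free R (R ⧸ Ideal.span {x}) :=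
      (h (R ⧸ Ideal.span {x}) hfinD).mp hDmem
    set κ := Module.Free.ChooseBasisIndex R (R ⧸ Ideal.span {x}) with hκ
    set bb := Module.Free.chooseBasis R (R ⧸ Ideal.span {x}) with hbb
    by_cases hk : Nonempty κ
    · obtain ⟨i⟩ := hk
      have h0 : x • (bb i) = 0 := by
        obtain ⟨t, ht⟩ := Ideal.Quotient.mk_surjective (bb i)
        rw [← ht, ExtAux.smul_mk_quot, Ideal.Quotient.eq_zero_iff_mem]
        exact Ideal.mul_mem_right _ _ (Ideal.mem_span_singleton_self x)
      have h2 := congrArg (fun v => (bb.repr v) i) h0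
      simp only [map_smul, Finsupp.smul_apply, Module.Basis.repr_self,
        Finsupp.single_eq_same, smul_eq_mul, mul_one, map_zero,
        Finsupp.coe_zero, Pi.zero_apply] at h2
      have h3 := (hmin 1 0 (by rw [one_mul, zero_mul, add_zero, h2]; exact zero_mem _)).1
      exact ExtAux.one_not_mem_max h3
    · haveI : IsEmpty κ := not_nonempty_iff.mp hk
      have h1 : (1 : R ⧸ Ideal.span {x}) = 0 := bb.repr.injective (Subsingleton.elim _ _)
      exact hDone h1
  have part5 : ¬ IsModRSubcat R (ExtClosure R (R ⧸ Ideal.span {x})) := by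
    intro h
    have hfinK : Module.Finite R (ResidueField R) :=
      Module.Finite.of_surjective (Submodule.mkQ (maximalIdeal R))
        (Submodule.mkQ_surjective _)
    exact part1 (h (ResidueField R) hfinK)
  exact ⟨part1, part2, part3, part4, part5⟩
end

section
/- Let R be a stretched Artinian Gorenstein local ring with 𝔪³ = 0 and edim R ≥ 2, and let x ∈ 𝔪 \ 𝔪² be an element such that the annihilator (0 :_R x) is contained in (x) + 𝔪². Then (0 :_R x) = (x), and consequently R/(x) has a periodic minimal free resolution ⋯ →x R →x R →x R → R/(x) → 0, so the Betti numbers of R/(x) are bounded. -/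
universe u

open IsLocalRing

/-- `M` admits a resolution `⋯ → R^{aᵢ} → ⋯ → R^{a₁} → R^{a₀} → M → 0` by finitely
generated free modules whose ranks `aᵢ` are bounded.  Over a Noetherian local ring this is
equivalent to the boundedness of the Betti numbers `βᵢᴿ(M) = dim_k Torᵢᴿ(k, M)` of `M`. -/
def HasBoundedBettiNumbers (R : Type u) [CommRing R] (M : Type u) [AddCommGroup M]
    [Module R M] : Prop :=
  ∃ (C : ℕ) (a : ℕ → ℕ) (d : ∀ i : ℕ, (Fin (a (i + 1)) → R) →ₗ[R] (Fin (a i) → R))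
    (ε : (Fin (a 0) → R) →ₗ[R] M),
    (∀ i, a i ≤ C) ∧ Function.Surjective ε ∧ Function.Exact (d 0) ε ∧
    ∀ i, Function.Exact (d (i + 1)) (d i)

/-- Double annihilator property for principal ideals over a self-injective commutative
ring: if every annihilator of `a` annihilates `b`, then `b ∈ (a)`. -/
lemma dbl_ann_principal {R : Type u} [CommRing R] (hGor : Module.Injective R R) (a b : R)
    (h : ∀ r : R, r * a = 0 → r * b = 0) : ∃ c : R, b = a * c := by
  set K := LinearMap.ker (LinearMap.lsmul R R a) with hKdef
  have hK : K ≤ LinearMap.ker (LinearMap.lsmul R R b) := by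
    intro r hr
    simp only [hKdef, LinearMap.mem_ker, LinearMap.lsmul_apply, smul_eq_mul] at *
    rw [mul_comm] at hr ⊢
    exact h r hr
  obtain ⟨F, hF⟩ := hGor.out (K.liftQ (LinearMap.lsmul R R a) le_rfl)
    (by
      rw [← LinearMap.ker_eq_bot]
      exact Submodule.ker_liftQ_eq_bot _ _ _ le_rfl)
    (K.liftQ (LinearMap.lsmul R R b) hK)
  refine ⟨F 1, ?_⟩
  have h1 : F a = b := by
    have := hF (Submodule.Quotient.mk 1)
    rw [Submodule.liftQ_apply, Submodule.liftQ_apply] at this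
    simpa using this
  calc b = F a := h1.symm
    _ = F (a • 1) := by rw [smul_eq_mul, mul_one]
    _ = a • F 1 := F.map_smul a 1
    _ = a * F 1 := rfl

/-- Let `R` be a stretched Artinian Gorenstein local ring (Gorenstein: `R` is
self-injective; stretched: `𝔪^(ℓ(R) - edim R) ≠ 0`, where the length `ℓ(R)` is the Krull
dimension of the submodule lattice of `R`) with `𝔪³ = 0` and `edim R ≥ 2`, and let
`x ∈ 𝔪 \ 𝔪²` be such that `(0 :_R x) ⊆ (x) + 𝔪²`.  Then `(0 :_R x) = (x)`, and `R/(x)`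
has the periodic minimal free resolution `⋯ →^x R →^x R →^x R → R/(x) → 0`, so the Betti
numbers of `R/(x)` are bounded. -/
theorem stmt_17 (R : Type u) [CommRing R] [IsLocalRing R] [IsArtinianRing R]
    (hGor : Module.Injective R R)
    (l : ℕ) (hl : Order.krullDim (Submodule R R) = (l : ℕ∞))
    (e : ℕ) (he : e = Module.finrank (ResidueField R) (CotangentSpace R))
    (hstretched : maximalIdeal R ^ (l - e) ≠ ⊥)
    (hm3 : maximalIdeal R ^ 3 = ⊥) (he2 : 2 ≤ e)
    (x : R) (hx : x ∈ maximalIdeal R) (hx2 : x ∉ maximalIdeal R ^ 2)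
    (hann : LinearMap.ker (LinearMap.lsmul R R x) ≤ Ideal.span {x} + maximalIdeal R ^ 2) :
    LinearMap.ker (LinearMap.lsmul R R x) = Ideal.span {x} ∧
    Function.Exact (LinearMap.lsmul R R x) (LinearMap.lsmul R R x) ∧
    Function.Exact (LinearMap.lsmul R R x) (Ideal.span {x} : Ideal R).mkQ ∧
    Function.Surjective (Ideal.span {x} : Ideal R).mkQ ∧
    HasBoundedBettiNumbers R (R ⧸ Ideal.span {x}) := by
  have hx0 : x ≠ 0 := fun h => hx2 (h ▸ (Ideal.zero_mem _))
  -- the annihilator of x is contained in the maximal ideal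
  have hannm : ∀ r : R, r * x = 0 → r ∈ maximalIdeal R := by
    intro r hr
    by_contra hrm
    have hu : IsUnit r := by
      by_contra hu
      exact hrm ((IsLocalRing.mem_maximalIdeal r).mpr (mem_nonunits_iff.mpr hu))
    obtain ⟨u, rfl⟩ := hu
    exact hx0 (by
      have := congrArg (fun t => (↑u⁻¹ : R) * t) hr
      simpa [← mul_assoc] using this)
  -- products of maximal ideal elements with 𝔪² vanish
  have hm3' : ∀ r : R, r ∈ maximalIdeal R → ∀ m ∈ maximalIdeal R ^ 2, r * m = 0 := by
    intro r hr m hm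
    have : r * m ∈ maximalIdeal R ^ 3 := by
      have : r * m ∈ maximalIdeal R * maximalIdeal R ^ 2 := Ideal.mul_mem_mul hr hm
      rwa [← pow_succ'] at this
    rw [hm3] at this
    simpa using this
  -- annihilator of x is contained in (x)
  have h2 : ∀ a : R, a * x = 0 → ∃ c, a = x * c := by
    intro a ha
    refine dbl_ann_principal hGor x a ?_
    intro r hr
    have hrk : r ∈ LinearMap.ker (LinearMap.lsmul R R x) := by
      simp [LinearMap.mem_ker, smul_eq_mul, mul_comm x r, hr]
    obtain ⟨s, hs, m, hm, rfl⟩ := Submodule.mem_sup.mp (hann hrk)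
    obtain ⟨c, rfl⟩ := Ideal.mem_span_singleton.mp hs
    have ham : a ∈ maximalIdeal R := hannm a ha
    have h1 : x * c * a = c * (a * x) := by ring
    have h2 : m * a = a * m := mul_comm m a
    rw [add_mul, h1, ha, mul_zero, h2, hm3' a ham m hm, add_zero]
  -- x² = 0
  have hxx : x * x = 0 := by
    by_contra hxx
    -- otherwise 𝔪² ⊆ (x²) and we contradict edim ≥ 2
    have hm2x : ∀ m ∈ maximalIdeal R ^ 2, ∃ c, m = x * x * c := by
      intro m hm
      refine dbl_ann_principal hGor (x * x) m ?_
      intro r hr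
      have hrm : r ∈ maximalIdeal R := by
        by_contra hrm
        have hu : IsUnit r := by
          by_contra hu
          exact hrm ((IsLocalRing.mem_maximalIdeal r).mpr (mem_nonunits_iff.mpr hu))
        obtain ⟨u, rfl⟩ := hu
        exact hxx (by
          have := congrArg (fun t => (↑u⁻¹ : R) * t) hr
          simpa [← mul_assoc] using this)
      exact hm3' r hrm m hm
    -- all of 𝔪 would then lie in (x) + 𝔪²
    have hall : ∀ y ∈ maximalIdeal R, y ∈ Ideal.span {x} + maximalIdeal R ^ 2 := by
      intro y hy
      have hxy : x * y ∈ maximalIdeal R ^ 2 := by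
        rw [pow_two]; exact Ideal.mul_mem_mul hx hy
      obtain ⟨c, hc⟩ := hm2x (x * y) hxy
      have : (y - x * c) * x = 0 := by
        have : x * (y - x * c) = 0 := by
          rw [mul_sub, hc]; ring
        rw [mul_comm] at this; exact this
      obtain ⟨d, hd⟩ := h2 _ this
      have : y = x * (c + d) := by
        have : y - x * c = x * d := hd
        linear_combination this
      exact Submodule.mem_sup.mpr ⟨x * (c + d), Ideal.mem_span_singleton.mpr ⟨c + d, rfl⟩,
        0, (maximalIdeal R ^ 2).zero_mem, by rw [add_zero, this]⟩
    -- hence the cotangent space would be at most 1-dimensional, contradicting edim ≥ 2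
    have hfin : Module.finrank (ResidueField R) (CotangentSpace R) ≤ 1 := by
      apply finrank_le_one ((maximalIdeal R).toCotangent ⟨x, hx⟩)
      intro w
      obtain ⟨⟨y, hy⟩, rfl⟩ := Ideal.toCotangent_surjective _ w
      obtain ⟨a, ha, m, hm, hym⟩ := Submodule.mem_sup.mp (hall y hy)
      obtain ⟨s, rfl⟩ := Ideal.mem_span_singleton.mp ha
      have hm' : m ∈ maximalIdeal R := Ideal.pow_le_self two_ne_zero hm
      refine ⟨algebraMap R (ResidueField R) s, ?_⟩
      rw [algebraMap_smul]
      have hsplit : (⟨y, hy⟩ : maximalIdeal R) = s • ⟨x, hx⟩ + ⟨m, hm'⟩ := by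
        ext
        simp [← hym, mul_comm]
      rw [hsplit, map_add, map_smul,
        (Ideal.toCotangent_eq_zero _ ⟨m, hm'⟩).mpr hm, add_zero]
    omega
  -- the kernel equals (x)
  have hker : LinearMap.ker (LinearMap.lsmul R R x) = Ideal.span {x} := by
    apply le_antisymm
    · intro a ha
      have ha' : a * x = 0 := by
        have := LinearMap.mem_ker.mp ha
        simpa [mul_comm] using this
      obtain ⟨c, hc⟩ := h2 a ha'
      exact Ideal.mem_span_singleton.mpr ⟨c, hc⟩
    · intro a ha
      obtain ⟨c, hc⟩ := Ideal.mem_span_singleton.mp ha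
      simp only [LinearMap.mem_ker, LinearMap.lsmul_apply, smul_eq_mul, hc]
      rw [← mul_assoc, hxx, zero_mul]
  refine ⟨hker, ?_, ?_, Submodule.mkQ_surjective _, ?_⟩
  · -- Exact (·x) (·x)
    rw [LinearMap.exact_iff, hker]
    ext a
    simp only [LinearMap.mem_range, LinearMap.lsmul_apply, smul_eq_mul]
    rw [Ideal.mem_span_singleton]
    exact ⟨fun ⟨c, hc⟩ => ⟨c, hc.symm⟩, fun ⟨c, hc⟩ => ⟨c, hc.symm⟩⟩
  · -- Exact (·x) mkQ
    rw [LinearMap.exact_iff, Submodule.ker_mkQ]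
    ext a
    simp only [LinearMap.mem_range, LinearMap.lsmul_apply, smul_eq_mul]
    rw [Ideal.mem_span_singleton]
    exact ⟨fun ⟨c, hc⟩ => ⟨c, hc.symm⟩, fun ⟨c, hc⟩ => ⟨c, hc.symm⟩⟩
  · -- bounded Betti numbers via the periodic resolution
    refine ⟨1, fun _ => 1, fun _ => LinearMap.lsmul R (Fin 1 → R) x,
      (Ideal.span {x} : Ideal R).mkQ.comp (LinearMap.proj 0), fun _ => le_rfl, ?_, ?_, ?_⟩
    · intro q
      obtain ⟨r, rfl⟩ := Submodule.mkQ_surjective _ q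
      exact ⟨fun _ => r, rfl⟩
    · intro f
      simp only [LinearMap.comp_apply, LinearMap.proj_apply, Submodule.mkQ_apply,
        Submodule.Quotient.mk_eq_zero, Set.mem_range, LinearMap.lsmul_apply]
      rw [Ideal.mem_span_singleton]
      constructor
      · rintro ⟨c, hc⟩
        refine ⟨fun _ => c, funext fun j => ?_⟩
        have : j = 0 := Subsingleton.elim _ _
        subst this
        simpa [smul_eq_mul, mul_comm] using hc.symm
      · rintro ⟨g, rfl⟩
        exact ⟨g 0, by simp [mul_comm]⟩
    · intro i f
      simp only [Set.mem_range, LinearMap.lsmul_apply]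
      constructor
      · intro hf
        have hfj : ∀ j, ∃ c, f j = x * c := by
          intro j
          have : x * f j = 0 := congrFun hf j
          have hker' : f j ∈ LinearMap.ker (LinearMap.lsmul R R x) := by
            simpa [LinearMap.mem_ker, smul_eq_mul] using this
          rw [hker] at hker'
          exact Ideal.mem_span_singleton.mp hker' |>.imp fun c hc => by rw [hc, mul_comm]
        choose g hg using hfj
        refine ⟨g, funext fun j => ?_⟩
        simp [smul_eq_mul, (hg j).symm]
      · rintro ⟨g, rfl⟩
        funext j
        simp only [Pi.smul_apply, smul_eq_mul, Pi.zero_apply]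
        rw [← mul_assoc, hxx, zero_mul]
end
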